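/- arXiv:2410.20289 — 4 statements merged into one kernel-verified Lean document; each statement's English description precedes it below -/
import Mathlib

section
/- For every γ ∈ [0,1], every sequence of depths D_1 < … < D_r, and every choice of finite cutpoint sets S_1, …, S_p ⊆ ℝ, the kernel K : ℝ^p × ℝ^p → ℝ defined by K(x, x') = k^{(D_1,…,D_r)}_{0,γ}(n⁻(x,x'), n⁰(x,x'), n⁺(x,x')) is positive semidefinite, and K(x, x) = 1 for all x; i.e. the pseudo-recursive truncated sub-correlation function is a valid correlation function. -/
/-- Total weight `W(v) = Σ_{i : v_i ≠ 0} w_i` of the axes with at least one available split. -/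
noncomputable def bartW (p : ℕ) (w : Fin p → ℝ) (v : Fin p → ℕ) : ℝ :=
  ∑ i ∈ Finset.univ.filter (fun i => v i ≠ 0), w i


/-- Auxiliary pseudo-recursive truncated sub-correlation function `k̃_{d,γ}(current; original)`,
where `R = {D_1, …, D_{r-1}}` is the set of intermediate reset depths and `Dr = D_r` the final
truncation depth; `(bm, b0, bp)` are the original (full-grid) split counts. -/
noncomputable def bartKPRAux (p : ℕ) (w : Fin p → ℝ) (P : ℕ → ℝ)
    (R : Finset ℕ) (Dr : ℕ) (γ : ℝ) (bm b0 bp : Fin p → ℕ)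
    (d : ℕ) (nm n0 np : Fin p → ℕ) : ℝ :=
  if ∀ i, nm i + n0 i + np i = 0 then 1
  else if Dr ≤ d then
    (if ∀ i, n0 i = 0 then 1 else 1 - (1 - γ) * P Dr)
  else
    1 - P d * (1 - (1 / bartW p w (fun i => nm i + n0 i + np i)) *
      ∑ i ∈ Finset.univ.filter (fun i => nm i + n0 i + np i ≠ 0),
        (w i / ((nm i + n0 i + np i : ℕ) : ℝ)) *
          ((∑ k ∈ Finset.range (nm i),
              (if d + 1 ∈ R then bartKPRAux p w P R Dr γ bm b0 bp (d+1) bm b0 bp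
               else bartKPRAux p w P R Dr γ bm b0 bp (d+1) (Function.update nm i k) n0 np)) +
           (∑ k ∈ Finset.range (np i),
              (if d + 1 ∈ R then bartKPRAux p w P R Dr γ bm b0 bp (d+1) bm b0 bp
               else bartKPRAux p w P R Dr γ bm b0 bp (d+1) nm n0 (Function.update np i k)))))
termination_by Dr - d
decreasing_by all_goals omega

/-- The pseudo-recursive truncated sub-correlation function `k^{(D_1,…,D_{r+1})}_{d,γ}`,
where the strictly increasing depths are `Ds 0 < Ds 1 < … < Ds r` (so there are `r+1` of
them, the intermediate reset depths being `Ds 0, …, Ds (r-1)`). -/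
noncomputable def bartKPR (p : ℕ) (w : Fin p → ℝ) (P : ℕ → ℝ)
    (r : ℕ) (Ds : Fin (r+1) → ℕ) (γ : ℝ)
    (d : ℕ) (nm n0 np : Fin p → ℕ) : ℝ :=
  bartKPRAux p w P (Finset.image (fun j : Fin r => Ds j.castSucc) Finset.univ)
    (Ds (Fin.last r)) γ nm n0 np d nm n0 np

/-- Number of cutpoints (weakly) below both points, along each axis. -/
noncomputable def nMinus (p : ℕ) (S : Fin p → Finset ℝ) (x x' : Fin p → ℝ) : Fin p → ℕ :=
  fun i => ((S i).filter (fun s => s ≤ min (x i) (x' i))).card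

/-- Number of cutpoints strictly between the two points, along each axis. -/
noncomputable def nZero (p : ℕ) (S : Fin p → Finset ℝ) (x x' : Fin p → ℝ) : Fin p → ℕ :=
  fun i => ((S i).filter (fun s => min (x i) (x' i) < s ∧ s ≤ max (x i) (x' i))).card

/-- Number of cutpoints strictly above both points, along each axis. -/
noncomputable def nPlus (p : ℕ) (S : Fin p → Finset ℝ) (x x' : Fin p → ℝ) : Fin p → ℕ :=
  fun i => ((S i).filter (fun s => max (x i) (x' i) < s)).card



open Finset

lemma bartFinal_bound {Pd W T : ℝ} (hP0 : 0 ≤ Pd) (hP1 : Pd ≤ 1)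
    (hW : 0 < W) (hT0 : 0 ≤ T) (hTW : T ≤ W) :
    1 - Pd * (1 - 1/W * T) ∈ Set.Icc (0:ℝ) 1 := by
  have h1 : 1/W * T ≤ 1 := by
    rw [div_mul_eq_mul_div, one_mul, div_le_one hW]; exact hTW
  have h0 : 0 ≤ 1/W * T := mul_nonneg (by positivity) hT0
  constructor <;> [skip; skip] <;> [nlinarith; nlinarith]

lemma bartKPRAux_base {p : ℕ} {w : Fin p → ℝ} {P : ℕ → ℝ} {R : Finset ℕ} {Dr : ℕ} {γ : ℝ}
    (hP : ∀ d, P d ∈ Set.Icc (0 : ℝ) 1) (hγ : γ ∈ Set.Icc (0 : ℝ) 1)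
    (bm b0 bp : Fin p → ℕ) {d : ℕ} (hd : Dr ≤ d) (nm n0 np : Fin p → ℕ) :
    bartKPRAux p w P R Dr γ bm b0 bp d nm n0 np ∈ Set.Icc (0 : ℝ) 1 := by
  obtain ⟨hP0, hP1⟩ := hP Dr
  obtain ⟨hγ0, hγ1⟩ := hγ
  by_cases h1 : ∀ i, nm i + n0 i + np i = 0
  · rw [bartKPRAux, if_pos h1]; exact ⟨zero_le_one, le_refl 1⟩
  rw [bartKPRAux, if_neg h1, if_pos hd]
  split_ifs
  · exact ⟨zero_le_one, le_refl 1⟩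
  · constructor <;> [nlinarith; nlinarith]

lemma sum_ite_mem_bounds (n : ℕ) (f : ℕ → ℝ) (hf : ∀ k, f k ∈ Set.Icc (0:ℝ) 1) :
    0 ≤ ∑ k ∈ Finset.range n, f k ∧ (∑ k ∈ Finset.range n, f k) ≤ (n : ℝ) := by
  constructor
  · exact Finset.sum_nonneg fun k _ => (hf k).1
  · calc ∑ k ∈ Finset.range n, f k ≤ ∑ k ∈ Finset.range n, 1 :=
        Finset.sum_le_sum fun k _ => (hf k).2
      _ = (n : ℝ) := by simp

lemma bartKPRAux_mem {p : ℕ} {w : Fin p → ℝ} {P : ℕ → ℝ} {R : Finset ℕ} {Dr : ℕ} {γ : ℝ}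
    (hw : ∀ i, 0 < w i) (hP : ∀ d, P d ∈ Set.Icc (0 : ℝ) 1) (hγ : γ ∈ Set.Icc (0 : ℝ) 1)
    (bm b0 bp : Fin p → ℕ) :
    ∀ (k d : ℕ), Dr ≤ d + k → ∀ nm n0 np,
      bartKPRAux p w P R Dr γ bm b0 bp d nm n0 np ∈ Set.Icc (0 : ℝ) 1 := by
  intro k
  induction k with
  | zero => exact fun d hk nm n0 np => bartKPRAux_base hP hγ bm b0 bp (by omega) nm n0 np
  | succ k ih =>
    intro d hk nm n0 np
    by_cases hd : Dr ≤ d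
    · exact bartKPRAux_base hP hγ bm b0 bp hd nm n0 np
    by_cases h1 : ∀ i, nm i + n0 i + np i = 0
    · rw [bartKPRAux, if_pos h1]; exact ⟨zero_le_one, le_refl 1⟩
    rw [bartKPRAux, if_neg h1, if_neg hd]
    have hih : ∀ nm' n0' np', bartKPRAux p w P R Dr γ bm b0 bp (d+1) nm' n0' np' ∈ Set.Icc (0:ℝ) 1 :=
      fun nm' n0' np' => ih (d+1) (by omega) nm' n0' np'
    have hWpos : 0 < bartW p w (fun i => nm i + n0 i + np i) := by
      obtain ⟨i0, hi0⟩ := not_forall.mp h1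
      exact Finset.sum_pos (fun i _ => hw i)
        ⟨i0, Finset.mem_filter.mpr ⟨Finset.mem_univ _, hi0⟩⟩
    have hWeq : bartW p w (fun i => nm i + n0 i + np i) =
        ∑ i ∈ Finset.univ.filter (fun i => nm i + n0 i + np i ≠ 0), w i := rfl
    have hbounds : ∀ i ∈ Finset.univ.filter (fun i => nm i + n0 i + np i ≠ 0),
        0 ≤ (w i / ((nm i + n0 i + np i : ℕ) : ℝ)) *
          ((∑ k ∈ Finset.range (nm i),
              (if d + 1 ∈ R then bartKPRAux p w P R Dr γ bm b0 bp (d+1) bm b0 bp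
               else bartKPRAux p w P R Dr γ bm b0 bp (d+1) (Function.update nm i k) n0 np)) +
           (∑ k ∈ Finset.range (np i),
              (if d + 1 ∈ R then bartKPRAux p w P R Dr γ bm b0 bp (d+1) bm b0 bp
               else bartKPRAux p w P R Dr γ bm b0 bp (d+1) nm n0 (Function.update np i k)))) ∧
        (w i / ((nm i + n0 i + np i : ℕ) : ℝ)) *
          ((∑ k ∈ Finset.range (nm i),
              (if d + 1 ∈ R then bartKPRAux p w P R Dr γ bm b0 bp (d+1) bm b0 bp
               else bartKPRAux p w P R Dr γ bm b0 bp (d+1) (Function.update nm i k) n0 np)) +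
           (∑ k ∈ Finset.range (np i),
              (if d + 1 ∈ R then bartKPRAux p w P R Dr γ bm b0 bp (d+1) bm b0 bp
               else bartKPRAux p w P R Dr γ bm b0 bp (d+1) nm n0 (Function.update np i k)))) ≤ w i := by
      intro i hi
      have hne : nm i + n0 i + np i ≠ 0 := by
        simpa using (Finset.mem_filter.mp hi).2
      have hnpos : (0:ℝ) < ((nm i + n0 i + np i : ℕ) : ℝ) := by
        exact_mod_cast Nat.pos_of_ne_zero hne
      obtain ⟨ha0, ha1⟩ := sum_ite_mem_bounds (nm i)
        (fun k => if d + 1 ∈ R then bartKPRAux p w P R Dr γ bm b0 bp (d+1) bm b0 bp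
               else bartKPRAux p w P R Dr γ bm b0 bp (d+1) (Function.update nm i k) n0 np)
        (fun k => by split_ifs <;> exact hih _ _ _)
      obtain ⟨hb0, hb1⟩ := sum_ite_mem_bounds (np i)
        (fun k => if d + 1 ∈ R then bartKPRAux p w P R Dr γ bm b0 bp (d+1) bm b0 bp
               else bartKPRAux p w P R Dr γ bm b0 bp (d+1) nm n0 (Function.update np i k))
        (fun k => by split_ifs <;> exact hih _ _ _)
      have hdiv0 : 0 ≤ w i / ((nm i + n0 i + np i : ℕ) : ℝ) :=
        div_nonneg (hw i).le hnpos.le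
      constructor
      · exact mul_nonneg hdiv0 (by linarith)
      · have hle : (∑ k ∈ Finset.range (nm i),
              (if d + 1 ∈ R then bartKPRAux p w P R Dr γ bm b0 bp (d+1) bm b0 bp
               else bartKPRAux p w P R Dr γ bm b0 bp (d+1) (Function.update nm i k) n0 np)) +
           (∑ k ∈ Finset.range (np i),
              (if d + 1 ∈ R then bartKPRAux p w P R Dr γ bm b0 bp (d+1) bm b0 bp
               else bartKPRAux p w P R Dr γ bm b0 bp (d+1) nm n0 (Function.update np i k)))
             ≤ ((nm i + n0 i + np i : ℕ) : ℝ) := by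
          push_cast
          linarith [Nat.cast_nonneg (α := ℝ) (n0 i)]
        calc (w i / ((nm i + n0 i + np i : ℕ) : ℝ)) * _ ≤
            (w i / ((nm i + n0 i + np i : ℕ) : ℝ)) * ((nm i + n0 i + np i : ℕ) : ℝ) :=
              mul_le_mul_of_nonneg_left hle hdiv0
          _ = w i := div_mul_cancel₀ (w i) hnpos.ne'
    refine bartFinal_bound (hP d).1 (hP d).2 hWpos
      (Finset.sum_nonneg fun i hi => (hbounds i hi).1) ?_
    rw [hWeq]
    exact Finset.sum_le_sum fun i hi => (hbounds i hi).2

lemma bartKPRAux_diag {p : ℕ} {w : Fin p → ℝ} {P : ℕ → ℝ} {R : Finset ℕ} {Dr : ℕ} {γ : ℝ}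
    (hw : ∀ i, 0 < w i) (bm b0 bp : Fin p → ℕ) (hb0 : ∀ i, b0 i = 0) :
    ∀ (k d : ℕ), Dr ≤ d + k → ∀ nm n0 np, (∀ i, n0 i = 0) →
      bartKPRAux p w P R Dr γ bm b0 bp d nm n0 np = 1 := by
  intro k
  induction k with
  | zero =>
    intro d hk nm n0 np h0
    by_cases h1 : ∀ i, nm i + n0 i + np i = 0
    · rw [bartKPRAux, if_pos h1]
    · rw [bartKPRAux, if_neg h1, if_pos (by omega), if_pos h0]
  | succ k ih =>
    intro d hk nm n0 np h0
    by_cases hd : Dr ≤ d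
    · by_cases h1 : ∀ i, nm i + n0 i + np i = 0
      · rw [bartKPRAux, if_pos h1]
      · rw [bartKPRAux, if_neg h1, if_pos hd, if_pos h0]
    by_cases h1 : ∀ i, nm i + n0 i + np i = 0
    · rw [bartKPRAux, if_pos h1]
    rw [bartKPRAux, if_neg h1, if_neg hd]
    have hWpos : 0 < bartW p w (fun i => nm i + n0 i + np i) := by
      obtain ⟨i0, hi0⟩ := not_forall.mp h1
      exact Finset.sum_pos (fun i _ => hw i)
        ⟨i0, Finset.mem_filter.mpr ⟨Finset.mem_univ _, hi0⟩⟩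
    have hT : (∑ i ∈ Finset.univ.filter (fun i => nm i + n0 i + np i ≠ 0),
        (w i / ((nm i + n0 i + np i : ℕ) : ℝ)) *
          ((∑ k ∈ Finset.range (nm i),
              (if d + 1 ∈ R then bartKPRAux p w P R Dr γ bm b0 bp (d+1) bm b0 bp
               else bartKPRAux p w P R Dr γ bm b0 bp (d+1) (Function.update nm i k) n0 np)) +
           (∑ k ∈ Finset.range (np i),
              (if d + 1 ∈ R then bartKPRAux p w P R Dr γ bm b0 bp (d+1) bm b0 bp
               else bartKPRAux p w P R Dr γ bm b0 bp (d+1) nm n0 (Function.update np i k)))))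
        = bartW p w (fun i => nm i + n0 i + np i) := by
      rw [show bartW p w (fun i => nm i + n0 i + np i) =
        ∑ i ∈ Finset.univ.filter (fun i => nm i + n0 i + np i ≠ 0), w i from rfl]
      refine Finset.sum_congr rfl fun i hi => ?_
      have hne : nm i + n0 i + np i ≠ 0 := by
        simpa using (Finset.mem_filter.mp hi).2
      have hnpos : (0:ℝ) < ((nm i + n0 i + np i : ℕ) : ℝ) := by
        exact_mod_cast Nat.pos_of_ne_zero hne
      have hSm : (∑ k ∈ Finset.range (nm i),
              (if d + 1 ∈ R then bartKPRAux p w P R Dr γ bm b0 bp (d+1) bm b0 bp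
               else bartKPRAux p w P R Dr γ bm b0 bp (d+1) (Function.update nm i k) n0 np))
          = (nm i : ℝ) := by
        rw [Finset.sum_congr rfl (fun k _ => ?_), Finset.sum_const, Finset.card_range,
          nsmul_eq_mul, mul_one]
        split_ifs
        · exact ih (d+1) (by omega) bm b0 bp hb0
        · exact ih (d+1) (by omega) _ n0 np h0
      have hSp : (∑ k ∈ Finset.range (np i),
              (if d + 1 ∈ R then bartKPRAux p w P R Dr γ bm b0 bp (d+1) bm b0 bp
               else bartKPRAux p w P R Dr γ bm b0 bp (d+1) nm n0 (Function.update np i k)))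
          = (np i : ℝ) := by
        rw [Finset.sum_congr rfl (fun k _ => ?_), Finset.sum_const, Finset.card_range,
          nsmul_eq_mul, mul_one]
        split_ifs
        · exact ih (d+1) (by omega) bm b0 bp hb0
        · exact ih (d+1) (by omega) nm n0 _ h0
      rw [hSm, hSp]
      have : ((nm i : ℝ)) + (np i : ℝ) = ((nm i + n0 i + np i : ℕ) : ℝ) := by
        push_cast [h0 i]; ring
      rw [this, div_mul_cancel₀ (w i) hnpos.ne']
    rw [hT, one_div, inv_mul_cancel₀ hWpos.ne']
    ring

/-- Kernel entry for a pair of cell-coordinate vectors `c, c'` in the full grid `m`,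
restricted to the box `[A, B]`. -/
noncomputable def bartEntry (p : ℕ) (w : Fin p → ℝ) (P : ℕ → ℝ)
    (R : Finset ℕ) (Dr : ℕ) (γ : ℝ) (m : Fin p → ℕ) (c c' : Fin p → ℕ)
    (d : ℕ) (A B : Fin p → ℕ) : ℝ :=
  bartKPRAux p w P R Dr γ
    (fun i => min (c i) (c' i))
    (fun i => max (c i) (c' i) - min (c i) (c' i))
    (fun i => m i - max (c i) (c' i)) d
    (fun i => min (c i) (c' i) - A i)
    (fun i => max (c i) (c' i) - min (c i) (c' i))
    (fun i => B i - max (c i) (c' i))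

lemma sum_sq_helper {ι : Type*} (G : Finset ι) (v : ι → ℝ) (x : ℝ) :
    ∑ a ∈ G, ∑ b ∈ G, v a * v b * x = x * (∑ a ∈ G, v a)^2 := by
  rw [sq, Finset.sum_mul_sum, Finset.mul_sum]
  refine Finset.sum_congr rfl fun a _ => ?_
  rw [Finset.mul_sum]
  exact Finset.sum_congr rfl fun b _ => by ring

lemma chi_sum_nonneg {ι κ : Type*} [DecidableEq κ] (G : Finset ι) (v : ι → ℝ) (c : ι → κ) :
    0 ≤ ∑ a ∈ G, ∑ b ∈ G, v a * v b * (if c a = c b then 1 else 0) := by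
  have h1 : ∀ a ∈ G, ∑ b ∈ G, v a * v b * (if c a = c b then 1 else 0)
      = v a * ∑ b ∈ G.filter (fun b => c b = c a), v b := by
    intro a _
    rw [Finset.sum_filter, Finset.mul_sum]
    refine Finset.sum_congr rfl fun b _ => ?_
    by_cases h : c b = c a
    · rw [if_pos h, if_pos h.symm]; ring
    · rw [if_neg h, if_neg (fun hh => h hh.symm)]; ring
  rw [Finset.sum_congr rfl h1,
    ← Finset.sum_fiberwise_of_maps_to (fun a ha => Finset.mem_image_of_mem c ha)]
  refine Finset.sum_nonneg fun z _ => ?_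
  have h2 : ∑ a ∈ G.filter (fun a => c a = z), v a * ∑ b ∈ G.filter (fun b => c b = c a), v b
      = (∑ a ∈ G.filter (fun a => c a = z), v a) * (∑ b ∈ G.filter (fun b => c b = z), v b) := by
    rw [Finset.sum_mul]
    refine Finset.sum_congr rfl fun a ha => ?_
    rw [(Finset.mem_filter.mp ha).2]
  rw [h2]
  exact mul_self_nonneg _

lemma bartEntry_psd_base {p : ℕ} {w : Fin p → ℝ} {P : ℕ → ℝ} {R : Finset ℕ} {Dr : ℕ} {γ : ℝ}
    (hP : ∀ d, P d ∈ Set.Icc (0 : ℝ) 1) (hγ : γ ∈ Set.Icc (0 : ℝ) 1)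
    (m : Fin p → ℕ) {N : ℕ} (c : Fin N → Fin p → ℕ) {d : ℕ} (hd : Dr ≤ d)
    (A B : Fin p → ℕ) (v : Fin N → ℝ) :
    0 ≤ ∑ a, ∑ b, v a * v b * bartEntry p w P R Dr γ m (c a) (c b) d A B := by
  have hE : ∀ a b : Fin N, bartEntry p w P R Dr γ m (c a) (c b) d A B
      = (1 - (1-γ) * P Dr) + (1-γ) * P Dr * (if c a = c b then 1 else 0) := by
    intro a b
    rw [bartEntry, bartKPRAux]
    by_cases hcc : c a = c b
    · have h0 : ∀ i, max (c a i) (c b i) - min (c a i) (c b i) = 0 := fun i => by rw [hcc]; omega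
      rw [if_pos hcc]
      split_ifs with h1
      · ring
      · ring
    · obtain ⟨i0, hi0⟩ := Function.ne_iff.mp hcc
      have h0 : max (c a i0) (c b i0) - min (c a i0) (c b i0) ≠ 0 := by omega
      rw [if_neg hcc]
      split_ifs with h1 h2
      · exact absurd (by have := h1 i0; omega : max (c a i0) (c b i0) - min (c a i0) (c b i0) = 0) h0
      · exact absurd (h2 i0) h0
      · ring
  rw [Finset.sum_congr rfl fun a _ => Finset.sum_congr rfl fun b _ => by rw [hE a b]]
  have hsplit : ∑ a, ∑ b, v a * v b *
      ((1 - (1-γ) * P Dr) + (1-γ) * P Dr * (if c a = c b then (1:ℝ) else 0))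
      = (∑ a, ∑ b : Fin N, v a * v b * (1 - (1-γ) * P Dr)) +
        (1-γ) * P Dr * (∑ a, ∑ b, v a * v b * (if c a = c b then (1:ℝ) else 0)) := by
    rw [Finset.mul_sum]
    rw [← Finset.sum_add_distrib]
    refine Finset.sum_congr rfl fun a _ => ?_
    rw [Finset.mul_sum, ← Finset.sum_add_distrib]
    refine Finset.sum_congr rfl fun b _ => by ring
  rw [hsplit]
  obtain ⟨hP0, hP1⟩ := hP Dr
  obtain ⟨hγ0, hγ1⟩ := hγ
  have g1 : (0:ℝ) ≤ ∑ a, ∑ b : Fin N, v a * v b * (1 - (1-γ) * P Dr) := by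
    rw [sum_sq_helper]
    have : 0 ≤ 1 - (1-γ) * P Dr := by nlinarith
    positivity
  have g2 := chi_sum_nonneg Finset.univ v c
  have : 0 ≤ (1-γ) * P Dr := by nlinarith
  nlinarith

lemma psd_split {ι κ : Type*} (G : Finset ι) (I : Finset κ) (v : ι → ℝ) (x y : ℝ)
    (h : κ → ℝ) (S : ι → ι → κ → ℝ) :
    ∑ a ∈ G, ∑ b ∈ G, v a * v b * (x + y * ∑ i ∈ I, h i * S a b i)
    = x * (∑ a ∈ G, v a)^2 + y * ∑ i ∈ I, h i * (∑ a ∈ G, ∑ b ∈ G, v a * v b * S a b i) := by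
  have e1 : ∑ a ∈ G, ∑ b ∈ G, v a * v b * (x + y * ∑ i ∈ I, h i * S a b i)
      = (∑ a ∈ G, ∑ b ∈ G, v a * v b * x)
        + ∑ a ∈ G, ∑ b ∈ G, ∑ i ∈ I, y * (h i * (v a * v b * S a b i)) := by
    rw [← Finset.sum_add_distrib]
    refine Finset.sum_congr rfl fun a _ => ?_
    rw [← Finset.sum_add_distrib]
    refine Finset.sum_congr rfl fun b _ => ?_
    rw [mul_add]
    congr 1
    simp only [Finset.mul_sum]
    exact Finset.sum_congr rfl fun i _ => by ring
  rw [e1, sum_sq_helper]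
  congr 1
  have e2 : ∑ a ∈ G, ∑ b ∈ G, ∑ i ∈ I, y * (h i * (v a * v b * S a b i))
      = ∑ i ∈ I, ∑ a ∈ G, ∑ b ∈ G, y * (h i * (v a * v b * S a b i)) := by
    rw [Finset.sum_congr rfl fun a (_ : a ∈ G) =>
      (Finset.sum_comm (s := G) (t := I) (f := fun b i => y * (h i * (v a * v b * S a b i))))]
    exact Finset.sum_comm
  rw [e2]
  simp only [Finset.mul_sum]

lemma sum_restrict {ι : Type*} [Fintype ι] (G : Finset ι) (u : ι → ℝ)
    (hu : ∀ a, a ∉ G → u a = 0) (F : ι → ι → ℝ) :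
    ∑ a, ∑ b, u a * u b * F a b = ∑ a ∈ G, ∑ b ∈ G, u a * u b * F a b := by
  rw [← Finset.sum_subset (Finset.subset_univ G)
    (fun a _ ha => Finset.sum_eq_zero fun b _ => by rw [hu a ha, zero_mul, zero_mul])]
  exact Finset.sum_congr rfl fun a _ =>
    (Finset.sum_subset (Finset.subset_univ G)
      (fun b _ hb => by rw [hu b hb, mul_zero, zero_mul])).symm

lemma sum_pull {ι : Type*} (G : Finset ι) (T : Finset ℕ) (v : ι → ℝ) (f : ℕ → ι → ι → ℝ) :
    ∑ a ∈ G, ∑ b ∈ G, v a * v b * (∑ t ∈ T, f t a b)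
      = ∑ t ∈ T, ∑ a ∈ G, ∑ b ∈ G, v a * v b * f t a b := by
  have e1 : ∑ a ∈ G, ∑ b ∈ G, v a * v b * (∑ t ∈ T, f t a b)
      = ∑ a ∈ G, ∑ b ∈ G, ∑ t ∈ T, v a * v b * f t a b := by
    refine Finset.sum_congr rfl fun a _ => Finset.sum_congr rfl fun b _ => ?_
    rw [Finset.mul_sum]
  rw [e1, Finset.sum_congr rfl fun a (_ : a ∈ G) =>
    (Finset.sum_comm (s := G) (t := T) (f := fun b t => v a * v b * f t a b))]
  exact Finset.sum_comm

lemma bartEntry_psd {p : ℕ} {w : Fin p → ℝ} {P : ℕ → ℝ} {R : Finset ℕ} {Dr : ℕ} {γ : ℝ}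
    (hw : ∀ i, 0 < w i) (hP : ∀ d, P d ∈ Set.Icc (0 : ℝ) 1) (hγ : γ ∈ Set.Icc (0 : ℝ) 1)
    (m : Fin p → ℕ) {N : ℕ} (c : Fin N → Fin p → ℕ) (hc : ∀ a i, c a i ≤ m i) :
    ∀ (k d : ℕ), Dr ≤ d + k → ∀ (A B : Fin p → ℕ) (v : Fin N → ℝ),
      (∀ a, v a ≠ 0 → ∀ i, A i ≤ c a i ∧ c a i ≤ B i) →
      0 ≤ ∑ a, ∑ b, v a * v b * bartEntry p w P R Dr γ m (c a) (c b) d A B := by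
  intro k
  induction k with
  | zero =>
    intro d hk A B v hv
    exact bartEntry_psd_base hP hγ m c (by omega) A B v
  | succ k ih =>
    intro d hk A B v hv
    by_cases hd : Dr ≤ d
    · exact bartEntry_psd_base hP hγ m c hd A B v
    set G : Finset (Fin N) := Finset.univ.filter (fun a => v a ≠ 0) with hG
    have hGv : ∀ a, a ∉ G → v a = 0 := fun a ha => by
      by_contra h
      exact ha (Finset.mem_filter.mpr ⟨Finset.mem_univ _, h⟩)
    have hGmem : ∀ a ∈ G, ∀ i, A i ≤ c a i ∧ c a i ≤ B i := fun a ha =>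
      hv a (Finset.mem_filter.mp ha).2
    rw [sum_restrict G v hGv]
    by_cases hbox : ∀ i, B i = A i
    · have hE1 : ∑ a ∈ G, ∑ b ∈ G, v a * v b * bartEntry p w P R Dr γ m (c a) (c b) d A B
          = ∑ a ∈ G, ∑ b ∈ G, v a * v b * 1 := by
        refine Finset.sum_congr rfl fun a ha => Finset.sum_congr rfl fun b hb => ?_
        rw [bartEntry, bartKPRAux, if_pos]
        intro i
        have h1 := hGmem a ha i; have h2 := hGmem b hb i; have h3 := hbox i
        omega
      rw [hE1, sum_sq_helper]
      positivity
    rcases Finset.eq_empty_or_nonempty G with hGe | ⟨a0, ha0⟩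
    · rw [hGe]; simp
    have hABle : ∀ i, A i ≤ B i := fun i => by have := hGmem a0 ha0 i; omega
    obtain ⟨i0, hi0⟩ := not_forall.mp hbox
    have hWpos : 0 < bartW p w (fun i => B i - A i) := by
      refine Finset.sum_pos (fun i _ => hw i)
        ⟨i0, Finset.mem_filter.mpr ⟨Finset.mem_univ _, ?_⟩⟩
      have h1 := hABle i0
      show B i0 - A i0 ≠ 0
      omega
    -- rewrite every entry into split normal form
    have hEntry : ∑ a ∈ G, ∑ b ∈ G, v a * v b * bartEntry p w P R Dr γ m (c a) (c b) d A B
        = ∑ a ∈ G, ∑ b ∈ G, v a * v b *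
          ((1 - P d) + (P d / bartW p w (fun i => B i - A i)) *
          ∑ i ∈ Finset.univ.filter (fun i => B i - A i ≠ 0),
            (w i / ((B i - A i : ℕ) : ℝ)) *
              ((∑ k ∈ Finset.range (min (c a i) (c b i) - A i),
                  (if d + 1 ∈ R then bartEntry p w P R Dr γ m (c a) (c b) (d+1) (fun _ => 0) m
                   else bartKPRAux p w P R Dr γ (fun j => min (c a j) (c b j))
                     (fun j => max (c a j) (c b j) - min (c a j) (c b j))
                     (fun j => m j - max (c a j) (c b j)) (d+1)
                     (Function.update (fun j => min (c a j) (c b j) - A j) i k)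
                     (fun j => max (c a j) (c b j) - min (c a j) (c b j))
                     (fun j => B j - max (c a j) (c b j)))) +
               (∑ k ∈ Finset.range (B i - max (c a i) (c b i)),
                  (if d + 1 ∈ R then bartEntry p w P R Dr γ m (c a) (c b) (d+1) (fun _ => 0) m
                   else bartKPRAux p w P R Dr γ (fun j => min (c a j) (c b j))
                     (fun j => max (c a j) (c b j) - min (c a j) (c b j))
                     (fun j => m j - max (c a j) (c b j)) (d+1)
                     (fun j => min (c a j) (c b j) - A j)
                     (fun j => max (c a j) (c b j) - min (c a j) (c b j))
                     (Function.update (fun j => B j - max (c a j) (c b j)) i k))))) := by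
      refine Finset.sum_congr rfl fun a ha => Finset.sum_congr rfl fun b hb => ?_
      have h1 : ¬ ∀ i, (min (c a i) (c b i) - A i) +
          (max (c a i) (c b i) - min (c a i) (c b i)) + (B i - max (c a i) (c b i)) = 0 := by
        intro hall
        apply hbox
        intro i
        have := hall i
        have ha' := hGmem a ha i; have hb' := hGmem b hb i
        omega
      have hptw : ∀ i, (min (c a i) (c b i) - A i) +
          (max (c a i) (c b i) - min (c a i) (c b i)) + (B i - max (c a i) (c b i)) = B i - A i :=
        fun i => by have ha' := hGmem a ha i; have hb' := hGmem b hb i; omega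
      have hreset : bartKPRAux p w P R Dr γ (fun j => min (c a j) (c b j))
          (fun j => max (c a j) (c b j) - min (c a j) (c b j))
          (fun j => m j - max (c a j) (c b j)) (d+1)
          (fun j => min (c a j) (c b j))
          (fun j => max (c a j) (c b j) - min (c a j) (c b j))
          (fun j => m j - max (c a j) (c b j))
          = bartEntry p w P R Dr γ m (c a) (c b) (d+1) (fun _ => 0) m := by
        rw [bartEntry]
        congr 1
      rw [bartEntry, bartKPRAux, if_neg h1, if_neg hd]
      simp only [hptw, hreset]
      ring
    rw [hEntry, psd_split]
    have hP1 := (hP d).2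
    refine add_nonneg (mul_nonneg (by linarith) (sq_nonneg _))
      (mul_nonneg (div_nonneg (hP d).1 hWpos.le) (Finset.sum_nonneg fun i _ =>
        mul_nonneg (div_nonneg (hw i).le (Nat.cast_nonneg _)) ?_))
    -- per-axis nonnegativity
    have hQsplit : ∑ a ∈ G, ∑ b ∈ G, v a * v b * ((∑ k ∈ Finset.range (min (c a i) (c b i) - A i),
                  (if d + 1 ∈ R then bartEntry p w P R Dr γ m (c a) (c b) (d+1) (fun _ => 0) m
                   else bartKPRAux p w P R Dr γ (fun j => min (c a j) (c b j))
                     (fun j => max (c a j) (c b j) - min (c a j) (c b j))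
                     (fun j => m j - max (c a j) (c b j)) (d+1)
                     (Function.update (fun j => min (c a j) (c b j) - A j) i k)
                     (fun j => max (c a j) (c b j) - min (c a j) (c b j))
                     (fun j => B j - max (c a j) (c b j)))) + (∑ k ∈ Finset.range (B i - max (c a i) (c b i)),
                  (if d + 1 ∈ R then bartEntry p w P R Dr γ m (c a) (c b) (d+1) (fun _ => 0) m
                   else bartKPRAux p w P R Dr γ (fun j => min (c a j) (c b j))
                     (fun j => max (c a j) (c b j) - min (c a j) (c b j))
                     (fun j => m j - max (c a j) (c b j)) (d+1)
                     (fun j => min (c a j) (c b j) - A j)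
                     (fun j => max (c a j) (c b j) - min (c a j) (c b j))
                     (Function.update (fun j => B j - max (c a j) (c b j)) i k))))
        = (∑ a ∈ G, ∑ b ∈ G, v a * v b * (∑ k ∈ Finset.range (min (c a i) (c b i) - A i),
                  (if d + 1 ∈ R then bartEntry p w P R Dr γ m (c a) (c b) (d+1) (fun _ => 0) m
                   else bartKPRAux p w P R Dr γ (fun j => min (c a j) (c b j))
                     (fun j => max (c a j) (c b j) - min (c a j) (c b j))
                     (fun j => m j - max (c a j) (c b j)) (d+1)
                     (Function.update (fun j => min (c a j) (c b j) - A j) i k)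
                     (fun j => max (c a j) (c b j) - min (c a j) (c b j))
                     (fun j => B j - max (c a j) (c b j)))))
          + (∑ a ∈ G, ∑ b ∈ G, v a * v b * (∑ k ∈ Finset.range (B i - max (c a i) (c b i)),
                  (if d + 1 ∈ R then bartEntry p w P R Dr γ m (c a) (c b) (d+1) (fun _ => 0) m
                   else bartKPRAux p w P R Dr γ (fun j => min (c a j) (c b j))
                     (fun j => max (c a j) (c b j) - min (c a j) (c b j))
                     (fun j => m j - max (c a j) (c b j)) (d+1)
                     (fun j => min (c a j) (c b j) - A j)
                     (fun j => max (c a j) (c b j) - min (c a j) (c b j))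
                     (Function.update (fun j => B j - max (c a j) (c b j)) i k)))) := by
      rw [← Finset.sum_add_distrib]
      refine Finset.sum_congr rfl fun a _ => ?_
      rw [← Finset.sum_add_distrib]
      exact Finset.sum_congr rfl fun b _ => by ring
    rw [hQsplit]
    refine add_nonneg ?_ ?_
    · -- the "both right of the split" part
      have hSm : ∀ a ∈ G, ∀ b ∈ G, (∑ k ∈ Finset.range (min (c a i) (c b i) - A i),
                  (if d + 1 ∈ R then bartEntry p w P R Dr γ m (c a) (c b) (d+1) (fun _ => 0) m
                   else bartKPRAux p w P R Dr γ (fun j => min (c a j) (c b j))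
                     (fun j => max (c a j) (c b j) - min (c a j) (c b j))
                     (fun j => m j - max (c a j) (c b j)) (d+1)
                     (Function.update (fun j => min (c a j) (c b j) - A j) i k)
                     (fun j => max (c a j) (c b j) - min (c a j) (c b j))
                     (fun j => B j - max (c a j) (c b j))))
          = ∑ t ∈ Finset.Ico (A i) (B i), (if t + 1 ≤ min (c a i) (c b i) then (if d + 1 ∈ R then bartEntry p w P R Dr γ m (c a) (c b) (d+1) (fun _ => 0) m
                   else bartKPRAux p w P R Dr γ (fun j => min (c a j) (c b j))
                     (fun j => max (c a j) (c b j) - min (c a j) (c b j))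
                     (fun j => m j - max (c a j) (c b j)) (d+1) (Function.update (fun j => min (c a j) (c b j) - A j) i (min (c a i) (c b i) - (t + 1))) (fun j => max (c a j) (c b j) - min (c a j) (c b j)) (fun j => B j - max (c a j) (c b j))) else 0) := by
        intro a ha b hb
        have ham := hGmem a ha i; have hbm := hGmem b hb i
        symm
        calc ∑ t ∈ Finset.Ico (A i) (B i), (if t + 1 ≤ min (c a i) (c b i) then (if d + 1 ∈ R then bartEntry p w P R Dr γ m (c a) (c b) (d+1) (fun _ => 0) m
                   else bartKPRAux p w P R Dr γ (fun j => min (c a j) (c b j))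
                     (fun j => max (c a j) (c b j) - min (c a j) (c b j))
                     (fun j => m j - max (c a j) (c b j)) (d+1) (Function.update (fun j => min (c a j) (c b j) - A j) i (min (c a i) (c b i) - (t + 1))) (fun j => max (c a j) (c b j) - min (c a j) (c b j)) (fun j => B j - max (c a j) (c b j))) else 0)
            = ∑ t ∈ Finset.Ico (A i) (min (c a i) (c b i)), (if t + 1 ≤ min (c a i) (c b i) then (if d + 1 ∈ R then bartEntry p w P R Dr γ m (c a) (c b) (d+1) (fun _ => 0) m
                   else bartKPRAux p w P R Dr γ (fun j => min (c a j) (c b j))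
                     (fun j => max (c a j) (c b j) - min (c a j) (c b j))
                     (fun j => m j - max (c a j) (c b j)) (d+1) (Function.update (fun j => min (c a j) (c b j) - A j) i (min (c a i) (c b i) - (t + 1))) (fun j => max (c a j) (c b j) - min (c a j) (c b j)) (fun j => B j - max (c a j) (c b j))) else 0) := by
              symm
              refine Finset.sum_subset (Finset.Ico_subset_Ico_right (by omega)) fun t htB htn => ?_
              have h1 := Finset.mem_Ico.mp htB
              have h2 : ¬ t < min (c a i) (c b i) := fun hlt => htn (Finset.mem_Ico.mpr ⟨h1.1, hlt⟩)
              rw [if_neg (by omega)]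
          _ = ∑ t ∈ Finset.Ico (A i) (min (c a i) (c b i)), (if d + 1 ∈ R then bartEntry p w P R Dr γ m (c a) (c b) (d+1) (fun _ => 0) m
                   else bartKPRAux p w P R Dr γ (fun j => min (c a j) (c b j))
                     (fun j => max (c a j) (c b j) - min (c a j) (c b j))
                     (fun j => m j - max (c a j) (c b j)) (d+1) (Function.update (fun j => min (c a j) (c b j) - A j) i (min (c a i) (c b i) - (t + 1))) (fun j => max (c a j) (c b j) - min (c a j) (c b j)) (fun j => B j - max (c a j) (c b j))) := by
              refine Finset.sum_congr rfl fun t ht => ?_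
              exact if_pos (by have := (Finset.mem_Ico.mp ht).2; omega)
          _ = ∑ k ∈ Finset.range (min (c a i) (c b i) - A i), (if d + 1 ∈ R then bartEntry p w P R Dr γ m (c a) (c b) (d+1) (fun _ => 0) m
                   else bartKPRAux p w P R Dr γ (fun j => min (c a j) (c b j))
                     (fun j => max (c a j) (c b j) - min (c a j) (c b j))
                     (fun j => m j - max (c a j) (c b j)) (d+1) (Function.update (fun j => min (c a j) (c b j) - A j) i (min (c a i) (c b i) - (A i + k + 1))) (fun j => max (c a j) (c b j) - min (c a j) (c b j)) (fun j => B j - max (c a j) (c b j))) := Finset.sum_Ico_eq_sum_range _ _ _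
          _ = ∑ k ∈ Finset.range (min (c a i) (c b i) - A i), (if d + 1 ∈ R then bartEntry p w P R Dr γ m (c a) (c b) (d+1) (fun _ => 0) m
                   else bartKPRAux p w P R Dr γ (fun j => min (c a j) (c b j))
                     (fun j => max (c a j) (c b j) - min (c a j) (c b j))
                     (fun j => m j - max (c a j) (c b j)) (d+1) (Function.update (fun j => min (c a j) (c b j) - A j) i (min (c a i) (c b i) - A i - 1 - k)) (fun j => max (c a j) (c b j) - min (c a j) (c b j)) (fun j => B j - max (c a j) (c b j))) := by
              refine Finset.sum_congr rfl fun k hk => ?_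
              rw [show min (c a i) (c b i) - (A i + k + 1) = min (c a i) (c b i) - A i - 1 - k from by omega]
          _ = (∑ k ∈ Finset.range (min (c a i) (c b i) - A i),
                  (if d + 1 ∈ R then bartEntry p w P R Dr γ m (c a) (c b) (d+1) (fun _ => 0) m
                   else bartKPRAux p w P R Dr γ (fun j => min (c a j) (c b j))
                     (fun j => max (c a j) (c b j) - min (c a j) (c b j))
                     (fun j => m j - max (c a j) (c b j)) (d+1)
                     (Function.update (fun j => min (c a j) (c b j) - A j) i k)
                     (fun j => max (c a j) (c b j) - min (c a j) (c b j))
                     (fun j => B j - max (c a j) (c b j)))) :=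
              Finset.sum_range_reflect (fun k => (if d + 1 ∈ R then bartEntry p w P R Dr γ m (c a) (c b) (d+1) (fun _ => 0) m
                   else bartKPRAux p w P R Dr γ (fun j => min (c a j) (c b j))
                     (fun j => max (c a j) (c b j) - min (c a j) (c b j))
                     (fun j => m j - max (c a j) (c b j)) (d+1)
                     (Function.update (fun j => min (c a j) (c b j) - A j) i k)
                     (fun j => max (c a j) (c b j) - min (c a j) (c b j))
                     (fun j => B j - max (c a j) (c b j)))) (min (c a i) (c b i) - A i)
      rw [Finset.sum_congr rfl fun a ha => Finset.sum_congr rfl fun b hb =>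
        congrArg (v a * v b * ·) (hSm a ha b hb), sum_pull]
      refine Finset.sum_nonneg fun t ht => ?_
      have htI := Finset.mem_Ico.mp ht
      have hpoint : ∀ a ∈ G, ∀ b ∈ G, v a * v b * (if t + 1 ≤ min (c a i) (c b i) then (if d + 1 ∈ R then bartEntry p w P R Dr γ m (c a) (c b) (d+1) (fun _ => 0) m
                   else bartKPRAux p w P R Dr γ (fun j => min (c a j) (c b j))
                     (fun j => max (c a j) (c b j) - min (c a j) (c b j))
                     (fun j => m j - max (c a j) (c b j)) (d+1) (Function.update (fun j => min (c a j) (c b j) - A j) i (min (c a i) (c b i) - (t + 1))) (fun j => max (c a j) (c b j) - min (c a j) (c b j)) (fun j => B j - max (c a j) (c b j))) else 0)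
          = (fun a => if t + 1 ≤ c a i then v a else 0) a * (fun a => if t + 1 ≤ c a i then v a else 0) b * bartEntry p w P R Dr γ m (c a) (c b) (d+1) (if d + 1 ∈ R then (fun _ : Fin p => 0) else Function.update A i (t+1)) (if d + 1 ∈ R then m else B) := by
        intro a ha b hb
        beta_reduce
        by_cases hta : t + 1 ≤ c a i
        · by_cases htb : t + 1 ≤ c b i
          · rw [if_pos (by omega : t + 1 ≤ min (c a i) (c b i)), if_pos hta, if_pos htb]
            have hent : (if d + 1 ∈ R then bartEntry p w P R Dr γ m (c a) (c b) (d+1) (fun _ => 0) m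
                   else bartKPRAux p w P R Dr γ (fun j => min (c a j) (c b j))
                     (fun j => max (c a j) (c b j) - min (c a j) (c b j))
                     (fun j => m j - max (c a j) (c b j)) (d+1) (Function.update (fun j => min (c a j) (c b j) - A j) i (min (c a i) (c b i) - (t + 1))) (fun j => max (c a j) (c b j) - min (c a j) (c b j)) (fun j => B j - max (c a j) (c b j))) = bartEntry p w P R Dr γ m (c a) (c b) (d+1) (if d + 1 ∈ R then (fun _ : Fin p => 0) else Function.update A i (t+1)) (if d + 1 ∈ R then m else B) := by
              by_cases hR : d + 1 ∈ R
              · rw [if_pos hR, if_pos hR, if_pos hR]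
              · rw [if_neg hR, if_neg hR, if_neg hR, bartEntry]
                congr 1
                funext j
                simp only [Function.update_apply]
                by_cases h : j = i
                · subst h; simp
                · simp [h]
            rw [hent]
          · rw [if_neg (by omega : ¬ t + 1 ≤ min (c a i) (c b i)), if_neg htb]
            ring
        · rw [if_neg (by omega : ¬ t + 1 ≤ min (c a i) (c b i)), if_neg hta]
          ring
      rw [Finset.sum_congr rfl fun a ha => Finset.sum_congr rfl fun b hb => hpoint a ha b hb]
      rw [← sum_restrict G (fun a => if t + 1 ≤ c a i then v a else 0) (fun a ha => by simp only [hGv a ha, ite_self])]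
      refine ih (d+1) (by omega) (if d + 1 ∈ R then (fun _ : Fin p => 0) else Function.update A i (t+1)) (if d + 1 ∈ R then m else B) (fun a => if t + 1 ≤ c a i then v a else 0) ?_
      intro a hne j
      by_cases hta : t + 1 ≤ c a i
      · have hva : v a ≠ 0 := by simpa [hta] using hne
        have hmem := hv a hva j
        by_cases hR : d + 1 ∈ R
        · simp only [if_pos hR]
          exact ⟨Nat.zero_le _, hc a j⟩
        · simp only [if_neg hR, Function.update_apply]
          by_cases h : j = i
          · subst h; exact ⟨by simp [hta], by simp [hmem.2]⟩
          · simp only [if_neg h]; exact hmem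
      · exact absurd (by simp [hta]) hne
    · -- the "both left of the split" part
      have hSp : ∀ a ∈ G, ∀ b ∈ G, (∑ k ∈ Finset.range (B i - max (c a i) (c b i)),
                  (if d + 1 ∈ R then bartEntry p w P R Dr γ m (c a) (c b) (d+1) (fun _ => 0) m
                   else bartKPRAux p w P R Dr γ (fun j => min (c a j) (c b j))
                     (fun j => max (c a j) (c b j) - min (c a j) (c b j))
                     (fun j => m j - max (c a j) (c b j)) (d+1)
                     (fun j => min (c a j) (c b j) - A j)
                     (fun j => max (c a j) (c b j) - min (c a j) (c b j))
                     (Function.update (fun j => B j - max (c a j) (c b j)) i k)))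
          = ∑ t ∈ Finset.Ico (A i) (B i), (if max (c a i) (c b i) ≤ t then (if d + 1 ∈ R then bartEntry p w P R Dr γ m (c a) (c b) (d+1) (fun _ => 0) m
                   else bartKPRAux p w P R Dr γ (fun j => min (c a j) (c b j))
                     (fun j => max (c a j) (c b j) - min (c a j) (c b j))
                     (fun j => m j - max (c a j) (c b j)) (d+1) (fun j => min (c a j) (c b j) - A j) (fun j => max (c a j) (c b j) - min (c a j) (c b j)) (Function.update (fun j => B j - max (c a j) (c b j)) i (t - max (c a i) (c b i)))) else 0) := by
        intro a ha b hb
        have ham := hGmem a ha i; have hbm := hGmem b hb i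
        symm
        calc ∑ t ∈ Finset.Ico (A i) (B i), (if max (c a i) (c b i) ≤ t then (if d + 1 ∈ R then bartEntry p w P R Dr γ m (c a) (c b) (d+1) (fun _ => 0) m
                   else bartKPRAux p w P R Dr γ (fun j => min (c a j) (c b j))
                     (fun j => max (c a j) (c b j) - min (c a j) (c b j))
                     (fun j => m j - max (c a j) (c b j)) (d+1) (fun j => min (c a j) (c b j) - A j) (fun j => max (c a j) (c b j) - min (c a j) (c b j)) (Function.update (fun j => B j - max (c a j) (c b j)) i (t - max (c a i) (c b i)))) else 0)
            = ∑ t ∈ Finset.Ico (max (c a i) (c b i)) (B i), (if max (c a i) (c b i) ≤ t then (if d + 1 ∈ R then bartEntry p w P R Dr γ m (c a) (c b) (d+1) (fun _ => 0) m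
                   else bartKPRAux p w P R Dr γ (fun j => min (c a j) (c b j))
                     (fun j => max (c a j) (c b j) - min (c a j) (c b j))
                     (fun j => m j - max (c a j) (c b j)) (d+1) (fun j => min (c a j) (c b j) - A j) (fun j => max (c a j) (c b j) - min (c a j) (c b j)) (Function.update (fun j => B j - max (c a j) (c b j)) i (t - max (c a i) (c b i)))) else 0) := by
              symm
              refine Finset.sum_subset (Finset.Ico_subset_Ico (by omega) le_rfl) fun t htB htn => ?_
              have h1 := Finset.mem_Ico.mp htB
              have h2 : ¬ max (c a i) (c b i) ≤ t := fun hle => htn (Finset.mem_Ico.mpr ⟨hle, h1.2⟩)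
              rw [if_neg h2]
          _ = ∑ t ∈ Finset.Ico (max (c a i) (c b i)) (B i), (if d + 1 ∈ R then bartEntry p w P R Dr γ m (c a) (c b) (d+1) (fun _ => 0) m
                   else bartKPRAux p w P R Dr γ (fun j => min (c a j) (c b j))
                     (fun j => max (c a j) (c b j) - min (c a j) (c b j))
                     (fun j => m j - max (c a j) (c b j)) (d+1) (fun j => min (c a j) (c b j) - A j) (fun j => max (c a j) (c b j) - min (c a j) (c b j)) (Function.update (fun j => B j - max (c a j) (c b j)) i (t - max (c a i) (c b i)))) := by
              refine Finset.sum_congr rfl fun t ht => ?_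
              exact if_pos (Finset.mem_Ico.mp ht).1
          _ = ∑ k ∈ Finset.range (B i - max (c a i) (c b i)), (if d + 1 ∈ R then bartEntry p w P R Dr γ m (c a) (c b) (d+1) (fun _ => 0) m
                   else bartKPRAux p w P R Dr γ (fun j => min (c a j) (c b j))
                     (fun j => max (c a j) (c b j) - min (c a j) (c b j))
                     (fun j => m j - max (c a j) (c b j)) (d+1) (fun j => min (c a j) (c b j) - A j) (fun j => max (c a j) (c b j) - min (c a j) (c b j)) (Function.update (fun j => B j - max (c a j) (c b j)) i (max (c a i) (c b i) + k - max (c a i) (c b i)))) := Finset.sum_Ico_eq_sum_range _ _ _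
          _ = (∑ k ∈ Finset.range (B i - max (c a i) (c b i)),
                  (if d + 1 ∈ R then bartEntry p w P R Dr γ m (c a) (c b) (d+1) (fun _ => 0) m
                   else bartKPRAux p w P R Dr γ (fun j => min (c a j) (c b j))
                     (fun j => max (c a j) (c b j) - min (c a j) (c b j))
                     (fun j => m j - max (c a j) (c b j)) (d+1)
                     (fun j => min (c a j) (c b j) - A j)
                     (fun j => max (c a j) (c b j) - min (c a j) (c b j))
                     (Function.update (fun j => B j - max (c a j) (c b j)) i k))) := by
              refine Finset.sum_congr rfl fun k hk => ?_
              rw [show max (c a i) (c b i) + k - max (c a i) (c b i) = k from by omega]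
      rw [Finset.sum_congr rfl fun a ha => Finset.sum_congr rfl fun b hb =>
        congrArg (v a * v b * ·) (hSp a ha b hb), sum_pull]
      refine Finset.sum_nonneg fun t ht => ?_
      have htI := Finset.mem_Ico.mp ht
      have hpoint : ∀ a ∈ G, ∀ b ∈ G, v a * v b * (if max (c a i) (c b i) ≤ t then (if d + 1 ∈ R then bartEntry p w P R Dr γ m (c a) (c b) (d+1) (fun _ => 0) m
                   else bartKPRAux p w P R Dr γ (fun j => min (c a j) (c b j))
                     (fun j => max (c a j) (c b j) - min (c a j) (c b j))
                     (fun j => m j - max (c a j) (c b j)) (d+1) (fun j => min (c a j) (c b j) - A j) (fun j => max (c a j) (c b j) - min (c a j) (c b j)) (Function.update (fun j => B j - max (c a j) (c b j)) i (t - max (c a i) (c b i)))) else 0)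
          = (fun a => if c a i ≤ t then v a else 0) a * (fun a => if c a i ≤ t then v a else 0) b * bartEntry p w P R Dr γ m (c a) (c b) (d+1) (if d + 1 ∈ R then (fun _ : Fin p => 0) else A) (if d + 1 ∈ R then m else Function.update B i t) := by
        intro a ha b hb
        beta_reduce
        by_cases hta : c a i ≤ t
        · by_cases htb : c b i ≤ t
          · rw [if_pos (by omega : max (c a i) (c b i) ≤ t), if_pos hta, if_pos htb]
            have hent : (if d + 1 ∈ R then bartEntry p w P R Dr γ m (c a) (c b) (d+1) (fun _ => 0) m
                   else bartKPRAux p w P R Dr γ (fun j => min (c a j) (c b j))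
                     (fun j => max (c a j) (c b j) - min (c a j) (c b j))
                     (fun j => m j - max (c a j) (c b j)) (d+1) (fun j => min (c a j) (c b j) - A j) (fun j => max (c a j) (c b j) - min (c a j) (c b j)) (Function.update (fun j => B j - max (c a j) (c b j)) i (t - max (c a i) (c b i)))) = bartEntry p w P R Dr γ m (c a) (c b) (d+1) (if d + 1 ∈ R then (fun _ : Fin p => 0) else A) (if d + 1 ∈ R then m else Function.update B i t) := by
              by_cases hR : d + 1 ∈ R
              · rw [if_pos hR, if_pos hR, if_pos hR]
              · rw [if_neg hR, if_neg hR, if_neg hR, bartEntry]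
                congr 1
                funext j
                simp only [Function.update_apply]
                by_cases h : j = i
                · subst h; simp
                · simp [h]
            rw [hent]
          · rw [if_neg (by omega : ¬ max (c a i) (c b i) ≤ t), if_neg htb]
            ring
        · rw [if_neg (by omega : ¬ max (c a i) (c b i) ≤ t), if_neg hta]
          ring
      rw [Finset.sum_congr rfl fun a ha => Finset.sum_congr rfl fun b hb => hpoint a ha b hb]
      rw [← sum_restrict G (fun a => if c a i ≤ t then v a else 0) (fun a ha => by simp only [hGv a ha, ite_self])]
      refine ih (d+1) (by omega) (if d + 1 ∈ R then (fun _ : Fin p => 0) else A) (if d + 1 ∈ R then m else Function.update B i t) (fun a => if c a i ≤ t then v a else 0) ?_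
      intro a hne j
      by_cases hta : c a i ≤ t
      · have hva : v a ≠ 0 := by simpa [hta] using hne
        have hmem := hv a hva j
        by_cases hR : d + 1 ∈ R
        · simp only [if_pos hR]
          exact ⟨Nat.zero_le _, hc a j⟩
        · simp only [if_neg hR, Function.update_apply]
          by_cases h : j = i
          · subst h; exact ⟨hmem.1, by simp [hta]⟩
          · simp only [if_neg h]; exact hmem
      · exact absurd (by simp [hta]) hne

lemma card_filter_le_min (S : Finset ℝ) (u v : ℝ) :
    (S.filter (fun s => s ≤ min u v)).card
      = min ((S.filter (fun s => s ≤ u)).card) ((S.filter (fun s => s ≤ v)).card) := by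
  rcases le_total u v with h | h
  · rw [min_eq_left h,
      min_eq_left (Finset.card_le_card (Finset.monotone_filter_right S (fun s _ hs => le_trans hs h)))]
  · rw [min_eq_right h,
      min_eq_right (Finset.card_le_card (Finset.monotone_filter_right S (fun s _ hs => le_trans hs h)))]

lemma card_filter_le_max (S : Finset ℝ) (u v : ℝ) :
    (S.filter (fun s => s ≤ max u v)).card
      = max ((S.filter (fun s => s ≤ u)).card) ((S.filter (fun s => s ≤ v)).card) := by
  rcases le_total u v with h | h
  · rw [max_eq_right h,
      max_eq_right (Finset.card_le_card (Finset.monotone_filter_right S (fun s _ hs => le_trans hs h)))]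
  · rw [max_eq_left h,
      max_eq_left (Finset.card_le_card (Finset.monotone_filter_right S (fun s _ hs => le_trans hs h)))]

lemma card_filter_between (S : Finset ℝ) (u v : ℝ) (huv : u ≤ v) :
    (S.filter (fun s => u < s ∧ s ≤ v)).card
      = (S.filter (fun s => s ≤ v)).card - (S.filter (fun s => s ≤ u)).card := by
  have he : S.filter (fun s => u < s ∧ s ≤ v)
      = S.filter (fun s => s ≤ v) \ S.filter (fun s => s ≤ u) := by
    ext s
    simp only [Finset.mem_filter, Finset.mem_sdiff, not_and, not_le]
    constructor
    · rintro ⟨hs, h1, h2⟩; exact ⟨⟨hs, h2⟩, fun _ => h1⟩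
    · rintro ⟨⟨hs, h2⟩, h1⟩; exact ⟨hs, h1 hs, h2⟩
  rw [he, Finset.card_sdiff_of_subset (Finset.monotone_filter_right S (fun s _ hs => le_trans hs huv))]

lemma card_filter_gt (S : Finset ℝ) (v : ℝ) :
    (S.filter (fun s => v < s)).card = S.card - (S.filter (fun s => s ≤ v)).card := by
  have he : S.filter (fun s => v < s) = S \ S.filter (fun s => s ≤ v) := by
    ext s
    simp only [Finset.mem_filter, Finset.mem_sdiff, not_and, not_le]
    constructor
    · rintro ⟨hs, h⟩; exact ⟨hs, fun _ => h⟩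
    · rintro ⟨hs, h⟩; exact ⟨hs, h hs⟩
  rw [he, Finset.card_sdiff_of_subset (Finset.filter_subset _ _)]

/-- Theorem 10: for every `γ ∈ [0,1]`, strictly increasing depths `D_1 < … < D_{r+1}`
(given by `Ds : Fin (r+1) → ℕ`), and finite cutpoint sets `S_1, …, S_p`, the kernel
`K(x, x') = k^{(D_1,…,D_{r+1})}_{0,γ}(n⁻(x,x'), n⁰(x,x'), n⁺(x,x'))` is positive
semidefinite and `K(x, x) = 1`: the pseudo-recursive truncated sub-correlation function
is a valid correlation function. -/
theorem bartKPR_isCorrelation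
    (p : ℕ) (hp : 1 ≤ p) (w : Fin p → ℝ) (hw : ∀ i, 0 < w i)
    (P : ℕ → ℝ) (hP : ∀ d, P d ∈ Set.Icc (0 : ℝ) 1)
    (r : ℕ) (Ds : Fin (r + 1) → ℕ) (hDs : StrictMono Ds)
    (γ : ℝ) (hγ : γ ∈ Set.Icc (0 : ℝ) 1) (S : Fin p → Finset ℝ) :
    (∀ (N : ℕ) (x : Fin N → (Fin p → ℝ)) (c : Fin N → ℝ),
      0 ≤ ∑ a, ∑ b, c a * c b *
        bartKPR p w P r Ds γ 0
          (nMinus p S (x a) (x b)) (nZero p S (x a) (x b)) (nPlus p S (x a) (x b))) ∧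
    (∀ x : Fin p → ℝ,
      bartKPR p w P r Ds γ 0 (nMinus p S x x) (nZero p S x x) (nPlus p S x x) = 1) := by

  constructor
  · intro N x v
    set Rs : Finset ℕ := Finset.image (fun j : Fin r => Ds j.castSucc) Finset.univ with hRs
    set Dr : ℕ := Ds (Fin.last r) with hDr
    set q : Fin N → Fin p → ℕ := fun a i => ((S i).filter (fun s => s ≤ x a i)).card with hq
    have hqm : ∀ a i, q a i ≤ (S i).card := fun a i => Finset.card_filter_le _ _
    have hMin : ∀ a b, nMinus p S (x a) (x b) = fun i => min (q a i) (q b i) := by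
      intro a b; funext i; exact card_filter_le_min (S i) (x a i) (x b i)
    have hMax : ∀ a b, nZero p S (x a) (x b)
        = fun i => max (q a i) (q b i) - min (q a i) (q b i) := by
      intro a b; funext i
      rw [nZero]
      rw [card_filter_between (S i) _ _ min_le_max, card_filter_le_max, card_filter_le_min]
    have hPlus : ∀ a b, nPlus p S (x a) (x b)
        = fun i => (S i).card - max (q a i) (q b i) := by
      intro a b; funext i
      rw [nPlus]
      rw [card_filter_gt, card_filter_le_max]
    have hent : ∀ a b, bartKPR p w P r Ds γ 0
        (nMinus p S (x a) (x b)) (nZero p S (x a) (x b)) (nPlus p S (x a) (x b))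
        = bartEntry p w P Rs Dr γ (fun i => (S i).card) (q a) (q b) 0
            (fun _ => 0) (fun i => (S i).card) := by
      intro a b
      rw [bartKPR, bartEntry, hMin a b, hMax a b, hPlus a b]
      congr 1
    have key := bartEntry_psd (R := Rs) (Dr := Dr) (γ := γ) hw hP hγ (fun i => (S i).card) q hqm
      Dr 0 (by omega) (fun _ => 0) (fun i => (S i).card) v
      (fun a _ i => ⟨Nat.zero_le _, hqm a i⟩)
    rw [Finset.sum_congr rfl fun a _ => Finset.sum_congr rfl fun b _ => by rw [hent a b]]
    exact key
  · intro x
    have h0 : ∀ i, nZero p S x x i = 0 := by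
      intro i
      rw [nZero]
      refine Finset.card_eq_zero.mpr (Finset.filter_eq_empty_iff.mpr fun s _ => ?_)
      simp only [min_self, max_self]
      rintro ⟨h1, h2⟩
      exact absurd h2 (not_le.mpr h1)
    rw [bartKPR]
    exact bartKPRAux_diag hw (nMinus p S x x) (nZero p S x x) (nPlus p S x x) h0
      (Ds (Fin.last r)) 0 (by omega) _ _ _ h0
end

section
/- For every sequence of depths D_1 < … < D_r, every d ≤ D_r, and all n⁻, n⁰, n⁺ ∈ ℕ^p, the pseudo-recursive truncated function at γ = 1 is an upper bound on the exact BART sub-correlation function: k_d(n⁻, n⁰, n⁺) ≤ k^{(D_1,…,D_r)}_{d,1}(n⁻, n⁰, n⁺). -/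
/-- The BART sub-correlation function `k_d(n⁻, n⁰, n⁺)`, defined by well-founded recursion
on `Σ_i (n⁻_i + n⁺_i)`. -/
noncomputable def bartK (p : ℕ) (w : Fin p → ℝ) (P : ℕ → ℝ)
    (d : ℕ) (nm n0 np : Fin p → ℕ) : ℝ :=
  if ∀ i, nm i + n0 i + np i = 0 then 1
  else
    1 - P d * (1 - (1 / bartW p w (fun i => nm i + n0 i + np i)) *
      ∑ i ∈ Finset.univ.filter (fun i => nm i + n0 i + np i ≠ 0),
        (w i / ((nm i + n0 i + np i : ℕ) : ℝ)) *
          ((∑ k ∈ (Finset.range (nm i)).attach,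
              bartK p w P (d+1) (Function.update nm i k.1) n0 np) +
           (∑ k ∈ (Finset.range (np i)).attach,
              bartK p w P (d+1) nm n0 (Function.update np i k.1))))
termination_by ∑ i, (nm i + np i)
decreasing_by
  · have hk : k.1 < nm i := Finset.mem_range.mp k.2
    refine Finset.sum_lt_sum (fun j _ => ?_) ⟨i, Finset.mem_univ i, ?_⟩
    · rcases eq_or_ne j i with rfl | hj
      · simp only [Function.update_self]; omega
      · simp only [Function.update_of_ne hj]; omega
    · simp only [Function.update_self]; omega
  · have hk : k.1 < np i := Finset.mem_range.mp k.2
    refine Finset.sum_lt_sum (fun j _ => ?_) ⟨i, Finset.mem_univ i, ?_⟩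
    · rcases eq_or_ne j i with rfl | hj
      · simp only [Function.update_self]; omega
      · simp only [Function.update_of_ne hj]; omega
    · simp only [Function.update_self]; omega

/-
At depths `d < D_r` other than the reset depths, the truncated function satisfies the same
recursion as `k_d`; at depth `D_r` (with `γ = 1`) it is `1`, which bounds `k_d` because `k_d`
is a convex combination of `1` and a weighted mean of values in `[0, 1]`; and at a reset depth
its children are evaluated at the original counts, which dominate the restricted ones. So, by induction on
`D_r - d`, everything reduces to monotonicity of `k_d` in `(n⁻, n⁺)` for the product order.

Monotonicity is proved by well-founded induction on `(n⁻, n⁺)`, one increment of `n⁻_i` at a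
time (increments of `n⁺_i` follow by the symmetry `n⁻ ↔ n⁺` of the recursion). The increment adds
the child `K = k_{d+1}(n⁻, n⁰, n⁺)`, which by induction dominates all other children. If axis `i`
was already splittable, its average `S / n_i` becomes `(S + K) / (n_i + 1) ≥ S / n_i`, since
`S ≤ n_i K`; otherwise a new axis of weight `w_i` and value `K` enters the weighted mean, which
cannot decrease it for the same mediant reason. The case `n⁰ = 0`, where `k_d ≡ 1`, is split off,
because at `n = 0` the value `1` is imposed instead of given by the recursive formula.
-/

open Finset Function Set

lemma div_le_add_mul_div_add {T W a K : ℝ} (hW : 0 < W) (ha : 0 ≤ a) (h : T ≤ W * K) :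
    T / W ≤ (T + a * K) / (W + a) := by
  rw [div_le_div_iff₀ hW (by positivity)]
  nlinarith [mul_le_mul_of_nonneg_left h ha]

section SplitMean

variable {p : ℕ} {w : Fin p → ℝ} {f g : (Fin p → ℕ) × (Fin p → ℕ) → ℝ} {nm n0 np : Fin p → ℕ}

lemma mk_update_left_lt {x y : Fin p → ℕ} {i : Fin p} {k : ℕ} (hk : k ∈ range (x i)) :
    (update x i k, y) < (x, y) :=
  Prod.mk_lt_mk_iff_left.2 (update_lt_self_iff.2 (mem_range.1 hk))

lemma mk_update_right_lt {x y : Fin p → ℕ} {i : Fin p} {k : ℕ} (hk : k ∈ range (y i)) :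
    (x, update y i k) < (x, y) :=
  Prod.mk_lt_mk_iff_right.2 (update_lt_self_iff.2 (mem_range.1 hk))

lemma Prod.exists_update_succ_of_lt {x y : (Fin p → ℕ) × (Fin p → ℕ)} (h : x < y) :
    ∃ z, x ≤ z ∧ ((∃ i, y = (update z.1 i (z.1 i + 1), z.2)) ∨
      ∃ i, y = (z.1, update z.2 i (z.2 i + 1))) := by
  rcases Prod.lt_iff.1 h with ⟨h1, h2⟩ | ⟨h1, h2⟩
  · obtain ⟨i, hi⟩ := (Pi.lt_def.1 h1).2
    refine ⟨(update y.1 i (y.1 i - 1), y.2), Prod.mk_le_mk.2 ⟨?_, h2⟩, Or.inl ⟨i, ?_⟩⟩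
    · exact le_update_iff.2 ⟨by omega, fun j _ => h1.le j⟩
    · simp [Nat.sub_add_cancel (hi.trans_le' (Nat.zero_le _))]
  · obtain ⟨i, hi⟩ := (Pi.lt_def.1 h2).2
    refine ⟨(y.1, update y.2 i (y.2 i - 1)), Prod.mk_le_mk.2 ⟨h1, ?_⟩, Or.inr ⟨i, ?_⟩⟩
    · exact le_update_iff.2 ⟨by omega, fun j _ => h2.le j⟩
    · simp [Nat.sub_add_cancel (hi.trans_le' (Nat.zero_le _))]

lemma bartW_nonneg (hw : ∀ i, 0 ≤ w i) (v : Fin p → ℕ) : 0 ≤ bartW p w v :=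
  sum_nonneg fun i _ => hw i

lemma bartW_pos (hw : ∀ i, 0 < w i) {v : Fin p → ℕ} (hv : ¬ ∀ i, v i = 0) :
    0 < bartW p w v := by
  obtain ⟨i, hi⟩ := not_forall.1 hv
  exact sum_pos (fun j _ => hw j) ⟨i, mem_filter.2 ⟨mem_univ i, hi⟩⟩

noncomputable def bartChildSum (f : (Fin p → ℕ) × (Fin p → ℕ) → ℝ) (nm np : Fin p → ℕ)
    (i : Fin p) : ℝ :=
  (∑ k ∈ range (nm i), f (update nm i k, np)) + ∑ k ∈ range (np i), f (nm, update np i k)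

noncomputable def bartSplitTerm (p : ℕ) (w : Fin p → ℝ) (f : (Fin p → ℕ) × (Fin p → ℕ) → ℝ)
    (nm n0 np : Fin p → ℕ) (i : Fin p) : ℝ :=
  (w i / ((nm i + n0 i + np i : ℕ) : ℝ)) * bartChildSum f nm np i

noncomputable def bartSplitMean (p : ℕ) (w : Fin p → ℝ) (f : (Fin p → ℕ) × (Fin p → ℕ) → ℝ)
    (nm n0 np : Fin p → ℕ) : ℝ :=
  (1 / bartW p w (fun i => nm i + n0 i + np i)) *
    ∑ i ∈ univ.filter (fun i => nm i + n0 i + np i ≠ 0), bartSplitTerm p w f nm n0 np i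

lemma bartChildSum_mono {i : Fin p} (hfg : ∀ x < (nm, np), f x ≤ g x) :
    bartChildSum f nm np i ≤ bartChildSum g nm np i := by
  unfold bartChildSum
  gcongr with k hk k hk
  exacts [hfg _ (mk_update_left_lt hk), hfg _ (mk_update_right_lt hk)]

lemma bartChildSum_nonneg {i : Fin p} (hf : ∀ x < (nm, np), 0 ≤ f x) :
    0 ≤ bartChildSum f nm np i :=
  add_nonneg (sum_nonneg fun _ hk => hf _ (mk_update_left_lt hk))
    (sum_nonneg fun _ hk => hf _ (mk_update_right_lt hk))

lemma bartChildSum_le {i : Fin p} {K : ℝ} (hK : 0 ≤ K) (hf : ∀ x < (nm, np), f x ≤ K) :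
    bartChildSum f nm np i ≤ ((nm i + n0 i + np i : ℕ) : ℝ) * K := by
  have hm := sum_le_card_nsmul (range (nm i)) (fun k => f (update nm i k, np)) K
    fun k hk => hf _ (mk_update_left_lt hk)
  have hp := sum_le_card_nsmul (range (np i)) (fun k => f (nm, update np i k)) K
    fun k hk => hf _ (mk_update_right_lt hk)
  simp only [card_range, nsmul_eq_mul] at hm hp
  rw [bartChildSum]
  push_cast
  nlinarith [mul_nonneg (Nat.cast_nonneg (n0 i) : (0 : ℝ) ≤ n0 i) hK]

lemma bartChildSum_eq {i : Fin p} {c : ℝ} (hf : ∀ x < (nm, np), f x = c) :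
    bartChildSum f nm np i = (nm i + np i) * c := by
  rw [bartChildSum, sum_congr rfl fun k hk => hf _ (mk_update_left_lt hk),
    sum_congr rfl fun k hk => hf _ (mk_update_right_lt hk)]
  simp only [sum_const, card_range, nsmul_eq_mul]
  ring

lemma bartChildSum_le_update_succ_of_ne {i j : Fin p} (hji : j ≠ i)
    (hf : MonotoneOn f (Iio (update nm i (nm i + 1), np))) :
    bartChildSum f nm np j ≤ bartChildSum f (update nm i (nm i + 1)) np j := by
  have hle : nm ≤ update nm i (nm i + 1) := le_update_self_iff.2 (Nat.le_succ _)
  have hj : update nm i (nm i + 1) j = nm j := update_of_ne hji _ _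
  unfold bartChildSum
  rw [hj]
  gcongr with k hk k hk
  · have hup := mk_update_left_lt (y := np) (hj ▸ hk : k ∈ range (update nm i (nm i + 1) j))
    refine hf (LE.le.trans_lt ?_ hup) hup ?_ <;>
      exact Prod.mk_le_mk.2 ⟨update_le_update_iff.2 ⟨le_rfl, fun l _ => hle l⟩, le_rfl⟩
  · have hup := mk_update_right_lt (x := update nm i (nm i + 1)) hk
    refine hf (LE.le.trans_lt ?_ hup) hup ?_ <;> exact Prod.mk_le_mk.2 ⟨hle, le_rfl⟩

lemma bartChildSum_add_le_update_succ_self {i : Fin p}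
    (hf : MonotoneOn f (Iio (update nm i (nm i + 1), np))) :
    bartChildSum f nm np i + f (nm, np) ≤ bartChildSum f (update nm i (nm i + 1)) np i := by
  have hle : nm ≤ update nm i (nm i + 1) := le_update_self_iff.2 (Nat.le_succ _)
  have hB : ∑ k ∈ range (np i), f (nm, update np i k)
      ≤ ∑ k ∈ range (np i), f (update nm i (nm i + 1), update np i k) := by
    refine sum_le_sum fun k hk => ?_
    have hup := mk_update_right_lt (x := update nm i (nm i + 1)) hk
    refine hf (LE.le.trans_lt ?_ hup) hup ?_ <;> exact Prod.mk_le_mk.2 ⟨hle, le_rfl⟩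
  simp only [bartChildSum, update_self, update_idem, update_eq_self, sum_range_succ]
  linarith

lemma bartSplitTerm_mono (hw : ∀ i, 0 ≤ w i) (hfg : ∀ x < (nm, np), f x ≤ g x) (i : Fin p) :
    bartSplitTerm p w f nm n0 np i ≤ bartSplitTerm p w g nm n0 np i :=
  mul_le_mul_of_nonneg_left (bartChildSum_mono hfg) (div_nonneg (hw i) (Nat.cast_nonneg _))

lemma bartSplitTerm_le_update_succ_of_ne (hw : ∀ i, 0 ≤ w i) {i j : Fin p} (hji : j ≠ i)
    (hf : MonotoneOn f (Iio (update nm i (nm i + 1), np))) :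
    bartSplitTerm p w f nm n0 np j ≤ bartSplitTerm p w f (update nm i (nm i + 1)) n0 np j := by
  rw [bartSplitTerm, bartSplitTerm, update_of_ne hji]
  exact mul_le_mul_of_nonneg_left (bartChildSum_le_update_succ_of_ne hji hf)
    (div_nonneg (hw j) (Nat.cast_nonneg _))

lemma sum_bartSplitTerm_le (hw : ∀ i, 0 ≤ w i) {K : ℝ} (hK : 0 ≤ K)
    (hf : ∀ x < (nm, np), f x ≤ K) :
    ∑ i ∈ univ.filter (fun i => nm i + n0 i + np i ≠ 0), bartSplitTerm p w f nm n0 np i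
      ≤ bartW p w (fun i => nm i + n0 i + np i) * K := by
  rw [bartW, sum_mul]
  refine sum_le_sum fun i hi => ?_
  have hn : ((nm i + n0 i + np i : ℕ) : ℝ) ≠ 0 := by exact_mod_cast (mem_filter.1 hi).2
  calc bartSplitTerm p w f nm n0 np i
      ≤ (w i / ((nm i + n0 i + np i : ℕ) : ℝ)) * (((nm i + n0 i + np i : ℕ) : ℝ) * K) :=
        mul_le_mul_of_nonneg_left (bartChildSum_le hK hf) (div_nonneg (hw i) (Nat.cast_nonneg _))
    _ = w i * K := by field_simp

lemma bartSplitMean_le (hw : ∀ i, 0 ≤ w i) {K : ℝ} (hK : 0 ≤ K)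
    (hf : ∀ x < (nm, np), f x ≤ K) : bartSplitMean p w f nm n0 np ≤ K := by
  rw [bartSplitMean, one_div_mul_eq_div]
  exact div_le_of_le_mul₀ (bartW_nonneg hw _) hK
    (by rw [mul_comm]; exact sum_bartSplitTerm_le hw hK hf)

lemma bartSplitMean_nonneg (hw : ∀ i, 0 ≤ w i) (hf : ∀ x < (nm, np), 0 ≤ f x) :
    0 ≤ bartSplitMean p w f nm n0 np :=
  mul_nonneg (one_div_nonneg.2 (bartW_nonneg hw _)) <| sum_nonneg fun i _ =>
    mul_nonneg (div_nonneg (hw i) (Nat.cast_nonneg _)) (bartChildSum_nonneg hf)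

lemma bartSplitMean_mono (hw : ∀ i, 0 ≤ w i) (hfg : ∀ x < (nm, np), f x ≤ g x) :
    bartSplitMean p w f nm n0 np ≤ bartSplitMean p w g nm n0 np :=
  mul_le_mul_of_nonneg_left (sum_le_sum fun i _ => bartSplitTerm_mono hw hfg i)
    (one_div_nonneg.2 (bartW_nonneg hw _))

lemma bartSplitMean_eq_of_forall_eq {c : ℝ} (hw : ∀ i, 0 < w i) (h0 : ∀ i, n0 i = 0)
    (hne : ¬ ∀ i, nm i + n0 i + np i = 0) (hf : ∀ x < (nm, np), f x = c) :
    bartSplitMean p w f nm n0 np = c := by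
  have hterm : ∀ i ∈ univ.filter (fun i => nm i + n0 i + np i ≠ 0),
      bartSplitTerm p w f nm n0 np i = w i * c := by
    intro i hi
    have hn : ((nm i + np i : ℕ) : ℝ) ≠ 0 := by
      have := (mem_filter.1 hi).2
      rw [h0 i] at this
      exact_mod_cast this
    rw [bartSplitTerm, bartChildSum_eq hf, h0 i, add_zero]
    push_cast at hn ⊢
    field_simp
  rw [bartSplitMean, sum_congr rfl hterm, ← sum_mul]
  have hW := bartW_pos hw hne
  change 1 / bartW p w _ * (bartW p w _ * c) = c
  field_simp

lemma bartSplitMean_swap (f : (Fin p → ℕ) × (Fin p → ℕ) → ℝ) (nm n0 np : Fin p → ℕ) :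
    bartSplitMean p w f nm n0 np = bartSplitMean p w (f ∘ Prod.swap) np n0 nm := by
  have hn : ∀ i, np i + n0 i + nm i = nm i + n0 i + np i := fun i => by ring
  simp only [bartSplitMean, bartSplitTerm, bartChildSum, hn, comp_apply, Prod.swap_prod_mk]
  exact congrArg _ (sum_congr rfl fun i _ => by rw [add_comm (∑ k ∈ range (nm i), _)])

lemma bartSplitMean_le_update_succ_left_of_eq_zero (hw : ∀ i, 0 < w i) {i : Fin p}
    (hf : MonotoneOn f (Iio (update nm i (nm i + 1), np))) (hK : 0 ≤ f (nm, np))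
    (hne : ¬ ∀ j, nm j + n0 j + np j = 0) (hi : nm i + n0 i + np i = 0) :
    bartSplitMean p w f nm n0 np ≤ bartSplitMean p w f (update nm i (nm i + 1)) n0 np := by
  have hlt : (nm, np) < (update nm i (nm i + 1), np) :=
    Prod.mk_lt_mk_iff_left.2 (lt_update_self_iff.2 (Nat.lt_succ_self _))
  set F := univ.filter (fun j => nm j + n0 j + np j ≠ 0)
  set W := bartW p w (fun j => nm j + n0 j + np j)
  set T := ∑ j ∈ F, bartSplitTerm p w f nm n0 np j
  have hT : T ≤ W * f (nm, np) := sum_bartSplitTerm_le (fun j => (hw j).le) hK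
    fun x hx => hf (hx.trans hlt) hlt hx.le
  have hiF : i ∉ F := by simp [F]; omega
  have hFa : univ.filter (fun j => update nm i (nm i + 1) j + n0 j + np j ≠ 0) = insert i F := by
    ext j
    by_cases hj : j = i
    · subst hj; simp
    · simp [F, hj]
  have hWa : bartW p w (fun j => update nm i (nm i + 1) j + n0 j + np j) = w i + W := by
    rw [bartW, hFa, sum_insert hiF]; rfl
  have hTa : T ≤ ∑ j ∈ F, bartSplitTerm p w f (update nm i (nm i + 1)) n0 np j :=
    sum_le_sum fun j hj => bartSplitTerm_le_update_succ_of_ne (fun j => (hw j).le)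
      (ne_of_mem_of_not_mem hj hiF) hf
  have hself := bartChildSum_add_le_update_succ_self hf
  rw [show bartChildSum f nm np i = 0 by
    simp [bartChildSum, show nm i = 0 by omega, show np i = 0 by omega], zero_add] at hself
  have hni : ((update nm i (nm i + 1) i + n0 i + np i : ℕ) : ℝ) = 1 := by
    simp only [update_self]; norm_cast; omega
  rw [bartSplitMean, bartSplitMean, hWa, hFa, sum_insert hiF, bartSplitTerm, hni, div_one,
    one_div_mul_eq_div, one_div_mul_eq_div, add_comm (w i)]
  have hW : 0 < W := bartW_pos hw hne
  calc T / W ≤ (T + w i * f (nm, np)) / (W + w i) := div_le_add_mul_div_add hW (hw i).le hT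
    _ ≤ _ := div_le_div_of_nonneg_right
        (by linarith [mul_le_mul_of_nonneg_left hself (hw i).le]) (by linarith [hw i])

lemma bartSplitMean_le_update_succ_left_of_ne_zero (hw : ∀ i, 0 < w i) {i : Fin p}
    (hf : MonotoneOn f (Iio (update nm i (nm i + 1), np))) (hK : 0 ≤ f (nm, np))
    (hi : nm i + n0 i + np i ≠ 0) :
    bartSplitMean p w f nm n0 np ≤ bartSplitMean p w f (update nm i (nm i + 1)) n0 np := by
  have hlt : (nm, np) < (update nm i (nm i + 1), np) :=
    Prod.mk_lt_mk_iff_left.2 (lt_update_self_iff.2 (Nat.lt_succ_self _))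
  have hFa : univ.filter (fun j => update nm i (nm i + 1) j + n0 j + np j ≠ 0) =
      univ.filter (fun j => nm j + n0 j + np j ≠ 0) := by
    ext j
    by_cases hj : j = i
    · subst hj; simp; omega
    · simp [hj]
  have hWa : bartW p w (fun j => update nm i (nm i + 1) j + n0 j + np j) =
      bartW p w (fun j => nm j + n0 j + np j) := by
    rw [bartW, hFa]; rfl
  rw [bartSplitMean, bartSplitMean, hWa, hFa]
  refine mul_le_mul_of_nonneg_left (sum_le_sum fun j _ => ?_)
    (one_div_nonneg.2 (bartW_nonneg (fun j => (hw j).le) _))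
  rcases eq_or_ne j i with rfl | hj
  · set X : ℝ := ((nm j + n0 j + np j : ℕ) : ℝ)
    have hX : 0 < X := Nat.cast_pos.2 (Nat.pos_of_ne_zero hi)
    have hXa : ((update nm j (nm j + 1) j + n0 j + np j : ℕ) : ℝ) = X + 1 := by
      simp only [X, update_self]; push_cast; ring
    have hS := bartChildSum_le (n0 := n0) (i := j) hK fun x hx => hf (hx.trans hlt) hlt hx.le
    rw [bartSplitTerm, bartSplitTerm, hXa]
    calc w j / X * bartChildSum f nm np j = w j * (bartChildSum f nm np j / X) := by ring
      _ ≤ w j * ((bartChildSum f nm np j + 1 * f (nm, np)) / (X + 1)) :=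
        mul_le_mul_of_nonneg_left (div_le_add_mul_div_add hX zero_le_one hS) (hw j).le
      _ = w j / (X + 1) * (bartChildSum f nm np j + f (nm, np)) := by ring
      _ ≤ _ := mul_le_mul_of_nonneg_left (bartChildSum_add_le_update_succ_self hf)
        (div_nonneg (hw j).le (by linarith))
  · exact bartSplitTerm_le_update_succ_of_ne (fun j => (hw j).le) hj hf

lemma bartSplitMean_le_update_succ_left (hw : ∀ i, 0 < w i) (i : Fin p)
    (hf : MonotoneOn f (Iio (update nm i (nm i + 1), np))) (hK : 0 ≤ f (nm, np))
    (hne : ¬ ∀ j, nm j + n0 j + np j = 0) :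
    bartSplitMean p w f nm n0 np ≤ bartSplitMean p w f (update nm i (nm i + 1)) n0 np := by
  by_cases hi : nm i + n0 i + np i = 0
  · exact bartSplitMean_le_update_succ_left_of_eq_zero hw hf hK hne hi
  · exact bartSplitMean_le_update_succ_left_of_ne_zero hw hf hK hi

lemma bartSplitMean_le_update_succ_right (hw : ∀ i, 0 < w i) (i : Fin p)
    (hf : MonotoneOn f (Iio (nm, update np i (np i + 1)))) (hK : 0 ≤ f (nm, np))
    (hne : ¬ ∀ j, nm j + n0 j + np j = 0) :
    bartSplitMean p w f nm n0 np ≤ bartSplitMean p w f nm n0 (update np i (np i + 1)) := by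
  rw [bartSplitMean_swap f nm, bartSplitMean_swap f nm]
  refine bartSplitMean_le_update_succ_left hw i
    (fun x hx y hy hxy => hf (Prod.swap_lt_swap.2 hx) (Prod.swap_lt_swap.2 hy)
      (Prod.swap_le_swap.2 hxy)) hK fun h => hne fun j => by linarith [h j]

end SplitMean

section BartK

variable {p : ℕ} {w : Fin p → ℝ} {P : ℕ → ℝ} {d : ℕ} {nm n0 np : Fin p → ℕ}

lemma bartK_eq (hne : ¬ ∀ i, nm i + n0 i + np i = 0) :
    bartK p w P d nm n0 np =
      1 - P d * (1 - bartSplitMean p w (fun x => bartK p w P (d + 1) x.1 n0 x.2) nm n0 np) := by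
  have hattach : ∀ i, (∑ k ∈ (range (nm i)).attach, bartK p w P (d + 1) (update nm i k) n0 np) +
      (∑ k ∈ (range (np i)).attach, bartK p w P (d + 1) nm n0 (update np i k)) =
      bartChildSum (fun x => bartK p w P (d + 1) x.1 n0 x.2) nm np i := fun i =>
    congrArg₂ (· + ·) (sum_attach _ fun k => bartK p w P (d + 1) (update nm i k) n0 np)
      (sum_attach _ fun k => bartK p w P (d + 1) nm n0 (update np i k))
  rw [bartK, if_neg hne]
  simp only [hattach]
  rfl

lemma bartK_mem_Icc (hw : ∀ i, 0 ≤ w i) (hP : ∀ d, P d ∈ Icc (0 : ℝ) 1) :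
    bartK p w P d nm n0 np ∈ Icc (0 : ℝ) 1 := by
  suffices h : ∀ x : (Fin p → ℕ) × (Fin p → ℕ), ∀ d, bartK p w P d x.1 n0 x.2 ∈ Icc (0 : ℝ) 1 from
    h (nm, np) d
  intro x
  induction x using WellFoundedLT.induction with
  | _ x ih =>
  intro d
  by_cases hne : ∀ i, x.1 i + n0 i + x.2 i = 0
  · rw [bartK, if_pos hne]
    exact ⟨zero_le_one, le_rfl⟩
  rw [bartK_eq hne]
  have h0 := bartSplitMean_nonneg (n0 := n0) hw fun y hy => (ih y hy (d + 1)).1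
  have h1 := bartSplitMean_le (n0 := n0) hw zero_le_one fun y hy => (ih y hy (d + 1)).2
  obtain ⟨hP0, hP1⟩ := hP d
  constructor <;> nlinarith

lemma bartK_eq_one_of_n0_eq_zero (hw : ∀ i, 0 < w i) (h0 : ∀ i, n0 i = 0) :
    bartK p w P d nm n0 np = 1 := by
  suffices h : ∀ x : (Fin p → ℕ) × (Fin p → ℕ), ∀ d, bartK p w P d x.1 n0 x.2 = 1 from
    h (nm, np) d
  intro x
  induction x using WellFoundedLT.induction with
  | _ x ih =>
  intro d
  by_cases hne : ∀ i, x.1 i + n0 i + x.2 i = 0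
  · rw [bartK, if_pos hne]
  rw [bartK_eq hne, bartSplitMean_eq_of_forall_eq hw h0 hne fun y hy => ih y hy (d + 1)]
  ring

lemma bartK_monotone (hw : ∀ i, 0 < w i) (hP : ∀ d, P d ∈ Icc (0 : ℝ) 1) (d : ℕ)
    (n0 : Fin p → ℕ) : Monotone fun x : (Fin p → ℕ) × (Fin p → ℕ) => bartK p w P d x.1 n0 x.2 := by
  intro x y hxy
  induction y using WellFoundedLT.induction generalizing x d with
  | _ y ih =>
  rcases hxy.eq_or_lt with rfl | hlt
  · exact le_rfl
  by_cases h0 : ∀ i, n0 i = 0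
  · simp only [bartK_eq_one_of_n0_eq_zero hw h0, le_refl]
  have hne : ∀ z : (Fin p → ℕ) × (Fin p → ℕ), ¬ ∀ i, z.1 i + n0 i + z.2 i = 0 :=
    fun z h => h0 fun i => by have := h i; omega
  have hmono : MonotoneOn (fun z => bartK p w P (d + 1) z.1 n0 z.2) (Iio y) :=
    fun u _ v hv huv => ih v hv (d + 1) huv
  have hK : ∀ z : (Fin p → ℕ) × (Fin p → ℕ), 0 ≤ bartK p w P (d + 1) z.1 n0 z.2 :=
    fun z => (bartK_mem_Icc (fun i => (hw i).le) hP).1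
  obtain ⟨z, hxz, ⟨i, rfl⟩ | ⟨i, rfl⟩⟩ := Prod.exists_update_succ_of_lt hlt
  · have hzy : z < (update z.1 i (z.1 i + 1), z.2) :=
      Prod.mk_lt_mk_iff_left.2 (lt_update_self_iff.2 (Nat.lt_succ_self _))
    refine (ih z hzy d hxz).trans ?_
    dsimp only
    rw [bartK_eq (hne z), bartK_eq (hne (update z.1 i (z.1 i + 1), z.2))]
    gcongr
    · exact (hP d).1
    · exact bartSplitMean_le_update_succ_left hw i hmono (hK z) (hne z)
  · have hzy : z < (z.1, update z.2 i (z.2 i + 1)) :=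
      Prod.mk_lt_mk_iff_right.2 (lt_update_self_iff.2 (Nat.lt_succ_self _))
    refine (ih z hzy d hxz).trans ?_
    dsimp only
    rw [bartK_eq (hne z), bartK_eq (hne (z.1, update z.2 i (z.2 i + 1)))]
    gcongr
    · exact (hP d).1
    · exact bartSplitMean_le_update_succ_right hw i hmono (hK z) (hne z)

end BartK

section Truncated

variable {p : ℕ} {w : Fin p → ℝ} {P : ℕ → ℝ} {R : Finset ℕ} {Dr : ℕ} {γ : ℝ}
  {bm b0 bp : Fin p → ℕ}

lemma bartKPRAux_eq {d : ℕ} {nm n0 np : Fin p → ℕ} (hne : ¬ ∀ i, nm i + n0 i + np i = 0)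
    (hd : d < Dr) :
    bartKPRAux p w P R Dr γ bm b0 bp d nm n0 np =
      1 - P d * (1 - bartSplitMean p w (fun x => if d + 1 ∈ R
        then bartKPRAux p w P R Dr γ bm b0 bp (d + 1) bm b0 bp
        else bartKPRAux p w P R Dr γ bm b0 bp (d + 1) x.1 n0 x.2) nm n0 np) := by
  rw [bartKPRAux, if_neg hne, if_neg hd.not_ge]
  rfl

lemma bartKPRAux_one_of_le {d : ℕ} (hd : Dr ≤ d) (nm n0 np : Fin p → ℕ) :
    bartKPRAux p w P R Dr 1 bm b0 bp d nm n0 np = 1 := by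
  rw [bartKPRAux]
  split_ifs <;> ring

lemma bartK_le_bartKPRAux (hw : ∀ i, 0 < w i) (hP : ∀ d, P d ∈ Icc (0 : ℝ) 1) (d : ℕ)
    {nm np : Fin p → ℕ} (hb : (nm, np) ≤ (bm, bp)) :
    bartK p w P d nm b0 np ≤ bartKPRAux p w P R Dr 1 bm b0 bp d nm b0 np := by
  by_cases hd : Dr ≤ d
  · rw [bartKPRAux_one_of_le hd]
    exact (bartK_mem_Icc (fun i => (hw i).le) hP).2
  by_cases hne : ∀ i, nm i + b0 i + np i = 0
  · rw [bartK, if_pos hne, bartKPRAux, if_pos hne]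
  rw [bartK_eq hne, bartKPRAux_eq hne (not_le.1 hd)]
  gcongr
  · exact (hP d).1
  refine bartSplitMean_mono (fun i => (hw i).le) fun x hx => ?_
  split_ifs
  · exact (bartK_monotone hw hP (d + 1) b0 (hx.le.trans hb)).trans
      (bartK_le_bartKPRAux hw hP (d + 1) le_rfl)
  · exact bartK_le_bartKPRAux hw hP (d + 1) (hx.le.trans hb)
termination_by Dr - d

end Truncated

theorem bartK_le_bartKPR_general
    (p : ℕ) (w : Fin p → ℝ) (hw : ∀ i, 0 < w i)
    (P : ℕ → ℝ) (hP : ∀ d, P d ∈ Set.Icc (0 : ℝ) 1)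
    (r : ℕ) (Ds : Fin (r + 1) → ℕ)
    (d : ℕ) (nm n0 np : Fin p → ℕ) :
    bartK p w P d nm n0 np ≤ bartKPR p w P r Ds 1 d nm n0 np :=
  bartK_le_bartKPRAux hw hP d le_rfl

/-- Theorem 11: for strictly increasing depths `D_1 < … < D_{r+1}` and every `d ≤ D_{r+1}`,
the pseudo-recursive truncated sub-correlation function at `γ = 1` is an upper bound on the
exact BART sub-correlation function: `k_d ≤ k^{(D_1,…,D_{r+1})}_{d,1}`. -/
theorem bartK_le_bartKPR
    (p : ℕ) (hp : 1 ≤ p) (w : Fin p → ℝ) (hw : ∀ i, 0 < w i)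
    (P : ℕ → ℝ) (hP : ∀ d, P d ∈ Set.Icc (0 : ℝ) 1)
    (r : ℕ) (Ds : Fin (r + 1) → ℕ) (hDs : StrictMono Ds)
    (d : ℕ) (hd : d ≤ Ds (Fin.last r)) (nm n0 np : Fin p → ℕ) :
    bartK p w P d nm n0 np ≤ bartKPR p w P r Ds 1 d nm n0 np :=
  bartK_le_bartKPR_general p w hw P hP r Ds d nm n0 np
end

section
/- Let p ≥ 1 be an integer and η ≥ 0. The function K : [0,1]^p × [0,1]^p → ℝ given by K(x, x') = exp(−η·‖x − x'‖₁/p) − e^{−η}, i.e. the Laplace kernel restricted to the unit cube minus its minimum over the cube, is positive semidefinite. -/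
open MeasureTheory Finset
open scoped Nat

/-- Quadratic-form nonnegativity predicate for a kernel on `Fin N`. -/
def QuadNonneg {N : ℕ} (K : Fin N → Fin N → ℝ) : Prop :=
  ∀ c : Fin N → ℝ, 0 ≤ ∑ a, ∑ b, c a * c b * K a b

lemma quad_of_factor {N : ℕ} {ι : Type*} [Fintype ι] (B : ι → Fin N → ℝ) (c : Fin N → ℝ) :
    0 ≤ ∑ a, ∑ b, c a * c b * (∑ k, B k a * B k b) := by
  have h : ∑ a, ∑ b, c a * c b * (∑ k, B k a * B k b)
      = ∑ k : ι, (∑ a, c a * B k a) * (∑ b, c b * B k b) := by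
    calc ∑ a, ∑ b, c a * c b * (∑ k, B k a * B k b)
        = ∑ a, ∑ k : ι, ∑ b, (c a * B k a) * (c b * B k b) := by
          refine Finset.sum_congr rfl fun a _ => ?_
          rw [Finset.sum_comm]
          refine Finset.sum_congr rfl fun b _ => ?_
          rw [Finset.mul_sum]
          exact Finset.sum_congr rfl fun k _ => by ring
      _ = ∑ k : ι, ∑ a, ∑ b, (c a * B k a) * (c b * B k b) := Finset.sum_comm
      _ = ∑ k : ι, (∑ a, c a * B k a) * (∑ b, c b * B k b) := by
          exact Finset.sum_congr rfl fun k _ => (Finset.sum_mul_sum _ _ _ _).symm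
  rw [h]
  exact Finset.sum_nonneg fun k _ => mul_self_nonneg _

lemma exists_factor {N : ℕ} {K : Fin N → Fin N → ℝ}
    (hsymm : ∀ a b, K a b = K b a) (h : QuadNonneg K) :
    ∃ B : Fin N → Fin N → ℝ, ∀ a b, K a b = ∑ k, B k a * B k b := by
  have hM : (Matrix.of K).PosSemidef := by
    refine Matrix.posSemidef_iff_dotProduct_mulVec.mpr ⟨?_, ?_⟩
    · ext a b
      simp only [Matrix.conjTranspose_apply, Matrix.of_apply, star_trivial]
      exact hsymm b a
    · intro v
      have h' := h v
      have : dotProduct (star v) ((Matrix.of K).mulVec v) = ∑ a, ∑ b, v a * v b * K a b := by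
        simp only [dotProduct, Matrix.mulVec, dotProduct, star_trivial,
          Matrix.of_apply, Pi.star_apply]
        refine Finset.sum_congr rfl fun a _ => ?_
        rw [Finset.mul_sum]
        exact Finset.sum_congr rfl fun b _ => by ring
      rw [this]
      exact h'
  obtain ⟨B, hB⟩ := (by open scoped MatrixOrder in exact CStarAlgebra.nonneg_iff_eq_star_mul_self.mp hM.nonneg : ∃ B : Matrix (Fin N) (Fin N) ℝ, Matrix.of K = star B * B)
  refine ⟨fun k a => B k a, fun a b => ?_⟩
  have h1 : Matrix.of K a b = (B.conjTranspose * B) a b := by rw [hB]; rfl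
  simpa [Matrix.mul_apply, Matrix.conjTranspose_apply] using h1

set_option maxHeartbeats 1000000 in
lemma quadNonneg_mul {N : ℕ} {K L : Fin N → Fin N → ℝ}
    (hKs : ∀ a b, K a b = K b a) (hK : QuadNonneg K)
    (hLs : ∀ a b, L a b = L b a) (hL : QuadNonneg L) :
    QuadNonneg (fun a b => K a b * L a b) := by
  obtain ⟨B, hB⟩ := exists_factor hKs hK
  obtain ⟨C, hC⟩ := exists_factor hLs hL
  intro c
  show 0 ≤ ∑ a, ∑ b, c a * c b * (K a b * L a b)
  have hrw : ∀ a b, K a b * L a b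
      = ∑ kl : Fin N × Fin N, (B kl.1 a * C kl.2 a) * (B kl.1 b * C kl.2 b) := by
    intro a b
    rw [hB a b, hC a b, Finset.sum_mul_sum, Fintype.sum_prod_type]
    exact Finset.sum_congr rfl fun k _ => Finset.sum_congr rfl fun l _ => by ring
  simp only [hrw]
  exact quad_of_factor (ι := Fin N × Fin N) (fun kl a => B kl.1 a * C kl.2 a) c

lemma quadNonneg_pow {N : ℕ} {K : Fin N → Fin N → ℝ}
    (hKs : ∀ a b, K a b = K b a) (hK : QuadNonneg K) :
    ∀ n : ℕ, QuadNonneg (fun a b => K a b ^ (n + 1)) := by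
  intro n
  induction n with
  | zero => intro c; simpa only [zero_add, pow_one] using hK c
  | succ m ih =>
      have hPs : ∀ a b, K a b ^ (m + 1) = K b a ^ (m + 1) := fun a b => by rw [hKs]
      have hmul := quadNonneg_mul hKs hK hPs ih
      intro c
      have h' := hmul c
      simpa only [← pow_succ'] using h'

lemma min_quad {N : ℕ} (s : Fin N → ℝ) (hs : ∀ a, 0 ≤ s a) (c : Fin N → ℝ) :
    0 ≤ ∑ a, ∑ b, c a * c b * min (s a) (s b) := by
  classical
  set g : Fin N → ℝ → ℝ :=
    fun a u => c a * (Set.Ioc (0:ℝ) (s a)).indicator (fun _ => (1:ℝ)) u with hg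
  have hprod : ∀ a b : Fin N, (fun u => g a u * g b u)
      = fun u => (c a * c b) *
          (Set.Ioc (0:ℝ) (min (s a) (s b))).indicator (fun _ => (1:ℝ)) u := by
    intro a b
    funext u
    have hind : (Set.Ioc (0:ℝ) (s a)).indicator (fun _ => (1:ℝ)) u *
        (Set.Ioc (0:ℝ) (s b)).indicator (fun _ => (1:ℝ)) u
        = (Set.Ioc (0:ℝ) (min (s a) (s b))).indicator (fun _ => (1:ℝ)) u := by
      rw [← Set.inter_indicator_mul, Set.Ioc_inter_Ioc]
      simp
    simp only [hg]
    calc c a * (Set.Ioc (0:ℝ) (s a)).indicator (fun _ => (1:ℝ)) u *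
          (c b * (Set.Ioc (0:ℝ) (s b)).indicator (fun _ => (1:ℝ)) u)
        = (c a * c b) * ((Set.Ioc (0:ℝ) (s a)).indicator (fun _ => (1:ℝ)) u *
            (Set.Ioc (0:ℝ) (s b)).indicator (fun _ => (1:ℝ)) u) := by ring
      _ = (c a * c b) * (Set.Ioc (0:ℝ) (min (s a) (s b))).indicator (fun _ => (1:ℝ)) u := by
          rw [hind]
  have hintprod : ∀ a b : Fin N, Integrable (fun u => g a u * g b u) := by
    intro a b
    rw [hprod a b]
    apply Integrable.const_mul
    rw [integrable_indicator_iff measurableSet_Ioc]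
    exact integrableOn_const measure_Ioc_lt_top.ne
  have hIprod : ∀ a b : Fin N, ∫ u, g a u * g b u = c a * c b * min (s a) (s b) := by
    intro a b
    rw [hprod a b, integral_const_mul, integral_indicator_const _ measurableSet_Ioc,
      measureReal_def, Real.volume_Ioc]
    have h0 : (0:ℝ) ≤ min (s a) (s b) := le_min (hs a) (hs b)
    rw [smul_eq_mul, mul_one, ENNReal.toReal_ofReal (by linarith)]
    ring
  have key : ∑ a, ∑ b, c a * c b * min (s a) (s b) = ∫ u, (∑ a, g a u) ^ 2 := by
    have hsq : ∀ u : ℝ, (∑ a, g a u) ^ 2 = ∑ a, ∑ b, g a u * g b u := by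
      intro u
      rw [sq, Finset.sum_mul_sum]
    simp_rw [hsq]
    rw [integral_finset_sum _ (fun a _ => integrable_finset_sum _ (fun b _ => hintprod a b))]
    refine Finset.sum_congr rfl fun a _ => ?_
    rw [integral_finset_sum _ (fun b _ => hintprod a b)]
    exact Finset.sum_congr rfl fun b _ => (hIprod a b).symm
  rw [key]
  exact integral_nonneg fun u => sq_nonneg _

/-- Theorem 13 of the paper: the Laplace kernel on the unit cube minus its minimum over the
cube, `K(x, x') = exp(−η·‖x − x'‖₁/p) − e^{−η}`, is positive semidefinite on `[0,1]^p`. -/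
theorem laplace_sub_min_posSemidef
    (p : ℕ) (hp : 1 ≤ p) (η : ℝ) (hη : 0 ≤ η)
    (N : ℕ) (x : Fin N → (Fin p → ℝ)) (hx : ∀ a i, x a i ∈ Set.Icc (0 : ℝ) 1)
    (c : Fin N → ℝ) :
    0 ≤ ∑ a, ∑ b, c a * c b *
      (Real.exp (-η * (∑ i, |x a i - x b i|) / p) - Real.exp (-η)) := by
  have hp0 : (p : ℝ) ≠ 0 := Nat.cast_ne_zero.2 (by omega)
  set T : Fin N → Fin N → ℝ :=
    fun a b => (∑ i, (min (x a i) (x b i) + min (1 - x a i) (1 - x b i))) / p with hT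
  have hTs : ∀ a b, T a b = T b a := by
    intro a b
    simp only [hT]
    congr 1
    exact Finset.sum_congr rfl fun i _ => by rw [min_comm, min_comm (1 - x a i)]
  have hTq : QuadNonneg T := by
    intro d
    have h1 : ∀ i : Fin p,
        0 ≤ ∑ a, ∑ b, d a * d b * (min (x a i) (x b i) + min (1 - x a i) (1 - x b i)) := by
      intro i
      have hA := min_quad (fun a => x a i) (fun a => (hx a i).1) d
      have hB := min_quad (fun a => 1 - x a i) (fun a => by linarith [(hx a i).2]) d
      have hsplit : ∑ a, ∑ b, d a * d b * (min (x a i) (x b i) + min (1 - x a i) (1 - x b i))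
          = (∑ a, ∑ b, d a * d b * min (x a i) (x b i))
            + ∑ a, ∑ b, d a * d b * min (1 - x a i) (1 - x b i) := by
        rw [← Finset.sum_add_distrib]
        refine Finset.sum_congr rfl fun a _ => ?_
        rw [← Finset.sum_add_distrib]
        exact Finset.sum_congr rfl fun b _ => by ring
      rw [hsplit]
      exact add_nonneg hA hB
    have h2 : ∑ a, ∑ b, d a * d b * T a b
        = (∑ a, ∑ b, ∑ i,
            d a * d b * (min (x a i) (x b i) + min (1 - x a i) (1 - x b i))) / p := by
      rw [Finset.sum_div]
      refine Finset.sum_congr rfl fun a _ => ?_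
      rw [Finset.sum_div]
      refine Finset.sum_congr rfl fun b _ => ?_
      simp only [hT]
      rw [Finset.sum_div, Finset.sum_div, Finset.mul_sum]
      exact Finset.sum_congr rfl fun i _ => by ring
    have h3 : ∑ a, ∑ b, ∑ i,
          d a * d b * (min (x a i) (x b i) + min (1 - x a i) (1 - x b i))
        = ∑ i, ∑ a, ∑ b,
          d a * d b * (min (x a i) (x b i) + min (1 - x a i) (1 - x b i)) := by
      calc ∑ a, ∑ b, ∑ i,
            d a * d b * (min (x a i) (x b i) + min (1 - x a i) (1 - x b i))
          = ∑ a, ∑ i, ∑ b,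
            d a * d b * (min (x a i) (x b i) + min (1 - x a i) (1 - x b i)) :=
            Finset.sum_congr rfl fun a _ => Finset.sum_comm
        _ = ∑ i, ∑ a, ∑ b,
            d a * d b * (min (x a i) (x b i) + min (1 - x a i) (1 - x b i)) :=
            Finset.sum_comm
    rw [h2, h3]
    exact div_nonneg (Finset.sum_nonneg fun i _ => h1 i) (Nat.cast_nonneg p)
  have hTpow : ∀ n : ℕ, QuadNonneg (fun a b => T a b ^ (n + 1)) := quadNonneg_pow hTs hTq
  have hcoord : ∀ u v : ℝ, min u v + min (1 - u) (1 - v) = 1 - |u - v| := by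
    intro u v
    rcases le_total u v with h | h
    · rw [min_eq_left h, min_eq_right (by linarith), abs_of_nonpos (by linarith)]; ring
    · rw [min_eq_right h, min_eq_left (by linarith), abs_of_nonneg (by linarith)]; ring
  have hTval : ∀ a b, η * T a b - η = -η * (∑ i, |x a i - x b i|) / p := by
    intro a b
    have hsumeq : ∑ i, (min (x a i) (x b i) + min (1 - x a i) (1 - x b i))
        = (p : ℝ) - ∑ i, |x a i - x b i| := by
      simp_rw [hcoord]
      rw [Finset.sum_sub_distrib, Finset.sum_const, Finset.card_univ, Fintype.card_fin,
        nsmul_eq_mul, mul_one]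
    simp only [hT, hsumeq]
    field_simp
    ring
  have hsumm : ∀ a b : Fin N,
      Summable (fun n : ℕ => (η * T a b) ^ (n + 1) / (n + 1)!) := by
    intro a b
    exact (summable_nat_add_iff 1).2 (Real.summable_pow_div_factorial (η * T a b))
  have hpoint : ∀ a b : Fin N,
      Real.exp (-η * (∑ i, |x a i - x b i|) / p) - Real.exp (-η)
      = ∑' n : ℕ, Real.exp (-η) * ((η * T a b) ^ (n + 1) / (n + 1)!) := by
    intro a b
    rw [← hTval a b]
    have hexp : Real.exp (η * T a b) = ∑' n : ℕ, (η * T a b) ^ n / n ! := by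
      rw [Real.exp_eq_exp_ℝ, NormedSpace.exp_eq_tsum_div]
    have hzero := Summable.tsum_eq_zero_add (Real.summable_pow_div_factorial (η * T a b))
    calc Real.exp (η * T a b - η) - Real.exp (-η)
        = Real.exp (η * T a b) * Real.exp (-η) - Real.exp (-η) := by
          rw [show η * T a b - η = η * T a b + (-η) by ring, Real.exp_add]
      _ = (1 + ∑' n : ℕ, (η * T a b) ^ (n + 1) / (n + 1)!) * Real.exp (-η)
            - Real.exp (-η) := by
          rw [hexp, hzero]; norm_num
      _ = Real.exp (-η) * ∑' n : ℕ, (η * T a b) ^ (n + 1) / (n + 1)! := by ring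
      _ = ∑' n : ℕ, Real.exp (-η) * ((η * T a b) ^ (n + 1) / (n + 1)!) :=
          tsum_mul_left.symm
  have hsummE : ∀ a b : Fin N, Summable (fun n : ℕ =>
      c a * c b * (Real.exp (-η) * ((η * T a b) ^ (n + 1) / (n + 1)!))) :=
    fun a b => ((hsumm a b).mul_left _).mul_left _
  calc (0:ℝ)
      ≤ ∑' n : ℕ, ∑ a, ∑ b,
          c a * c b * (Real.exp (-η) * ((η * T a b) ^ (n + 1) / (n + 1)!)) := by
        refine tsum_nonneg fun n => ?_
        have hfactor : ∑ a, ∑ b,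
            c a * c b * (Real.exp (-η) * ((η * T a b) ^ (n + 1) / (n + 1)!))
            = (Real.exp (-η) * η ^ (n + 1) / (n + 1)!) *
              ∑ a, ∑ b, c a * c b * T a b ^ (n + 1) := by
          rw [Finset.mul_sum]
          refine Finset.sum_congr rfl fun a _ => ?_
          rw [Finset.mul_sum]
          refine Finset.sum_congr rfl fun b _ => ?_
          rw [mul_pow]
          ring
        rw [hfactor]
        have hpos : (0:ℝ) ≤ Real.exp (-η) * η ^ (n + 1) / (n + 1)! := by positivity
        exact mul_nonneg hpos (hTpow n c)
    _ = ∑ a, ∑ b, ∑' n : ℕ,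
          c a * c b * (Real.exp (-η) * ((η * T a b) ^ (n + 1) / (n + 1)!)) := by
        rw [Summable.tsum_finsetSum fun a _ => summable_sum fun b _ => hsummE a b]
        exact Finset.sum_congr rfl fun a _ => Summable.tsum_finsetSum fun b _ => hsummE a b
    _ = ∑ a, ∑ b, c a * c b *
          (Real.exp (-η * (∑ i, |x a i - x b i|) / p) - Real.exp (-η)) := by
        refine Finset.sum_congr rfl fun a _ => Finset.sum_congr rfl fun b _ => ?_
        rw [hpoint a b, tsum_mul_left]
end

section
/- Let p ≥ 1 be an integer, α ∈ (0,1], and η > 0. The function k : [0,1]^p × [0,1]^p → ℝ given by k(x, x') = 1 − α + (α/(1 − e^{−ηα}))·(exp(−ηα·‖x − x'‖₁/p) − e^{−ηα}) is positive semidefinite, and satisfies k(x, x) = 1 for all x ∈ [0,1]^p and k(x, x') = 1 − α whenever ‖x − x'‖₁ = p (i.e. at maximally separated corners of the cube); hence it is a valid correlation kernel matching the extreme values of the BART prior correlation function. -/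
open Matrix Finset MeasureTheory Real

private lemma quad_of_psd' {N : ℕ} {M : Matrix (Fin N) (Fin N) ℝ} (h : M.PosSemidef)
    (c : Fin N → ℝ) : 0 ≤ ∑ a, ∑ b, c a * c b * M a b := by
  have h2 := h.dotProduct_mulVec_nonneg c
  simp only [dotProduct, mulVec, star, Pi.star_apply, star_trivial] at h2
  calc (0:ℝ) ≤ ∑ a, c a * ∑ b, M a b * c b := h2
    _ = ∑ a, ∑ b, c a * c b * M a b := by
        refine Finset.sum_congr rfl fun a _ => ?_
        rw [Finset.mul_sum]
        exact Finset.sum_congr rfl fun b _ => by ring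

private lemma psd_of_quad' {N : ℕ} (M : Matrix (Fin N) (Fin N) ℝ)
    (hsym : ∀ a b, M a b = M b a) (hq : ∀ c : Fin N → ℝ, 0 ≤ ∑ a, ∑ b, c a * c b * M a b) :
    M.PosSemidef := by
  refine Matrix.PosSemidef.of_dotProduct_mulVec_nonneg ?_ ?_
  · ext a b; simpa [Matrix.conjTranspose_apply] using hsym b a
  · intro c
    have := hq c
    simp only [dotProduct, mulVec, star, Pi.star_apply, star_trivial]
    calc (0:ℝ) ≤ ∑ a, ∑ b, c a * c b * M a b := this
      _ = ∑ a, c a * ∑ b, M a b * c b := by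
          refine Finset.sum_congr rfl fun a _ => ?_
          rw [Finset.mul_sum]
          exact Finset.sum_congr rfl fun b _ => by ring

private lemma sum_swap4' {N : ℕ} (f : Fin N → Fin N → Fin N → Fin N → ℝ) :
    ∑ a, ∑ b, ∑ k, ∑ l, f a b k l = ∑ k, ∑ l, ∑ a, ∑ b, f a b k l := by
  calc ∑ a, ∑ b, ∑ k, ∑ l, f a b k l
      = ∑ a, ∑ k, ∑ b, ∑ l, f a b k l :=
        Finset.sum_congr rfl fun a _ => Finset.sum_comm
    _ = ∑ k, ∑ a, ∑ b, ∑ l, f a b k l := Finset.sum_comm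
    _ = ∑ k, ∑ a, ∑ l, ∑ b, f a b k l :=
        Finset.sum_congr rfl fun k _ => Finset.sum_congr rfl fun a _ => Finset.sum_comm
    _ = ∑ k, ∑ l, ∑ a, ∑ b, f a b k l :=
        Finset.sum_congr rfl fun k _ => Finset.sum_comm

private lemma schur' {N : ℕ} {A B : Matrix (Fin N) (Fin N) ℝ} (hA : A.PosSemidef)
    (hB : B.PosSemidef) : (Matrix.of fun a b => A a b * B a b).PosSemidef := by
  exact hA.hadamard hB

private lemma key_integral' (t m : ℝ) (hm0 : 0 ≤ m) (hm1 : m ≤ 1) :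
    ∫ u in Set.Ioc (0:ℝ) 1, (Set.Iic m).indicator (fun u => t * Real.exp (t*u)) u
      = Real.exp (t*m) - 1 := by
  rw [MeasureTheory.setIntegral_indicator measurableSet_Iic]
  have hs : Set.Ioc (0:ℝ) 1 ∩ Set.Iic m = Set.Ioc 0 m := by
    rw [Set.Ioc_inter_Iic, min_eq_right hm1]
  rw [hs, ← intervalIntegral.integral_of_le hm0]
  have hD : ∀ u ∈ Set.uIcc (0:ℝ) m,
      HasDerivAt (fun v => Real.exp (t*v)) (t * Real.exp (t*u)) u := by
    intro u _
    have h1 : HasDerivAt (fun v : ℝ => t*v) t u := by simpa using (hasDerivAt_id u).const_mul t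
    simpa [mul_comm] using h1.exp
  rw [intervalIntegral.integral_eq_sub_of_hasDerivAt (fun u hu => hD u hu)
    ((continuous_const.mul ((continuous_const.mul continuous_id).rexp)).intervalIntegrable _ _)]
  simp

private lemma expMin_psd' {N : ℕ} {t : ℝ} (ht : 0 ≤ t) (y : Fin N → ℝ)
    (hy : ∀ a, y a ∈ Set.Icc (0:ℝ) 1) :
    (Matrix.of fun a b => Real.exp (t * min (y a) (y b)) - 1).PosSemidef := by
  refine psd_of_quad' _ (fun a b => by simp [min_comm]) (fun c => ?_)
  classical
  set g : Fin N → ℝ → ℝ := fun a u => if u ≤ y a then (1:ℝ) else 0 with hg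
  have hcont : Continuous (fun u : ℝ => t * Real.exp (t*u)) :=
    continuous_const.mul ((continuous_const.mul continuous_id).rexp)
  have hInt : IntegrableOn (fun u => t * Real.exp (t*u)) (Set.Ioc (0:ℝ) 1) volume :=
    hcont.integrableOn_Ioc
  have hIntInd : ∀ m : ℝ, IntegrableOn
      ((Set.Iic m).indicator (fun u => t * Real.exp (t*u))) (Set.Ioc (0:ℝ) 1) volume :=
    fun m => hInt.indicator measurableSet_Iic
  have hptwise : ∀ u : ℝ, (t * Real.exp (t*u)) * (∑ a, c a * g a u)^2
      = ∑ a, ∑ b, (c a * c b) *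
          (Set.Iic (min (y a) (y b))).indicator (fun u => t * Real.exp (t*u)) u := by
    intro u
    rw [sq, Finset.sum_mul_sum, Finset.mul_sum]
    refine Finset.sum_congr rfl fun a _ => ?_
    rw [Finset.mul_sum]
    refine Finset.sum_congr rfl fun b _ => ?_
    simp only [Set.indicator_apply, Set.mem_Iic, le_min_iff, hg]
    split_ifs with h1 h2 h3 h2 h3 h3 <;> simp_all <;> ring
  have expand : ∑ a, ∑ b, c a * c b *
      ((Matrix.of fun a b => Real.exp (t * min (y a) (y b)) - 1) a b)
      = ∫ u in Set.Ioc (0:ℝ) 1, (t * Real.exp (t*u)) * (∑ a, c a * g a u)^2 := by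
    have hI : (∫ u in Set.Ioc (0:ℝ) 1, (t * Real.exp (t*u)) * (∑ a, c a * g a u)^2)
        = ∑ a, ∑ b, ∫ u in Set.Ioc (0:ℝ) 1, (c a * c b) *
            (Set.Iic (min (y a) (y b))).indicator (fun v => t * Real.exp (t*v)) u := by
      rw [MeasureTheory.integral_congr_ae (Filter.Eventually.of_forall hptwise)]
      rw [MeasureTheory.integral_finset_sum]
      · exact Finset.sum_congr rfl fun a _ => MeasureTheory.integral_finset_sum _
          (fun b _ => ((hIntInd _).const_mul _))
      · intro a _
        exact MeasureTheory.integrable_finset_sum _ (fun b _ => ((hIntInd _).const_mul _))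
    rw [hI]
    refine Finset.sum_congr rfl fun a _ => Finset.sum_congr rfl fun b _ => ?_
    rw [MeasureTheory.integral_const_mul, key_integral' t _ (le_min (hy a).1 (hy b).1)
      (min_le_of_left_le (hy a).2)]
    simp
  rw [expand]
  refine MeasureTheory.setIntegral_nonneg measurableSet_Ioc fun u _ => ?_
  exact mul_nonneg (mul_nonneg ht (Real.exp_pos _).le) (sq_nonneg _)

private lemma mul_shift' {N : ℕ} {f g : Fin N → Fin N → ℝ}
    (hf : (Matrix.of fun a b => f a b - 1).PosSemidef)
    (hg : (Matrix.of fun a b => g a b - 1).PosSemidef) :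
    (Matrix.of fun a b => f a b * g a b - 1).PosSemidef := by
  have h := (hf.add hg).add (schur' hf hg)
  have heq : (Matrix.of fun a b => f a b * g a b - 1)
      = ((Matrix.of fun a b => f a b - 1) + (Matrix.of fun a b => g a b - 1))
        + (Matrix.of fun a b => (Matrix.of fun a b => f a b - 1) a b
            * (Matrix.of fun a b => g a b - 1) a b) := by
    ext a b
    simp only [Matrix.add_apply, Matrix.of_apply]
    ring
  rw [heq]
  exact h

private lemma prod_Q' {N : ℕ} {ι : Type*} (s : Finset ι) (f : ι → Fin N → Fin N → ℝ)
    (h : ∀ i ∈ s, (Matrix.of fun a b => f i a b - 1).PosSemidef) :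
    (Matrix.of fun a b => (∏ i ∈ s, f i a b) - 1).PosSemidef := by
  classical
  induction s using Finset.cons_induction with
  | empty =>
    have : (Matrix.of fun (a b : Fin N) => (∏ i ∈ (∅ : Finset ι), f i a b) - 1)
        = (0 : Matrix (Fin N) (Fin N) ℝ) := by
      ext a b; simp
    rw [this]
    exact Matrix.PosSemidef.zero
  | cons i s hi ih =>
    have h1 := h i (Finset.mem_cons_self i s)
    have h2 := ih (fun j hj => h j (Finset.mem_cons_of_mem hj))
    have : (Matrix.of fun (a b : Fin N) => (∏ j ∈ Finset.cons i s hi, f j a b) - 1)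
        = (Matrix.of fun a b => f i a b * (∏ j ∈ s, f j a b) - 1) := by
      ext a b; simp only [Matrix.of_apply]; rw [Finset.prod_cons]
    rw [this]
    exact mul_shift' h1 h2

private lemma min_add_min' (u v : ℝ) :
    min u v + min (1-u) (1-v) = 1 - |u - v| := by
  rcases le_total u v with h | h
  · rw [min_eq_left h, min_eq_right (by linarith), abs_sub_comm, abs_of_nonneg (by linarith)]
    ring
  · rw [min_eq_right h, min_eq_left (by linarith), abs_of_nonneg (by linarith)]
    ring

/-- The shifted and rescaled Laplace kernel
`k(x, x') = 1 − α + (α/(1 − e^{−ηα}))·(exp(−ηα·‖x − x'‖₁/p) − e^{−ηα})`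
on the unit cube `[0,1]^p` is positive semidefinite, equals `1` on the diagonal, and equals
`1 − α` for maximally separated points (`‖x − x'‖₁ = p`); hence it is a valid correlation
kernel matching the extreme values of the BART prior correlation function. -/
theorem laplace_shifted_isCorrelation_matching_BART_extremes
    (p : ℕ) (hp : 1 ≤ p) (α : ℝ) (hα : α ∈ Set.Ioc (0 : ℝ) 1) (η : ℝ) (hη : 0 < η) :
    (∀ (N : ℕ) (x : Fin N → (Fin p → ℝ)), (∀ a i, x a i ∈ Set.Icc (0 : ℝ) 1) →
      ∀ c : Fin N → ℝ,
        0 ≤ ∑ a, ∑ b, c a * c b *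
          (1 - α + (α / (1 - Real.exp (-(η * α)))) *
            (Real.exp (-(η * α) * (∑ i, |x a i - x b i|) / p) - Real.exp (-(η * α))))) ∧
    (∀ x : Fin p → ℝ, (∀ i, x i ∈ Set.Icc (0 : ℝ) 1) →
      1 - α + (α / (1 - Real.exp (-(η * α)))) *
        (Real.exp (-(η * α) * (∑ i, |x i - x i|) / p) - Real.exp (-(η * α))) = 1) ∧
    (∀ x x' : Fin p → ℝ, (∀ i, x i ∈ Set.Icc (0 : ℝ) 1) → (∀ i, x' i ∈ Set.Icc (0 : ℝ) 1) →
      (∑ i, |x i - x' i|) = p →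
      1 - α + (α / (1 - Real.exp (-(η * α)))) *
        (Real.exp (-(η * α) * (∑ i, |x i - x' i|) / p) - Real.exp (-(η * α))) = 1 - α) := by
  have hp0 : (0:ℝ) < (p:ℝ) := by exact_mod_cast hp
  have hηα : 0 < η * α := mul_pos hη hα.1
  set E : ℝ := Real.exp (-(η * α)) with hE
  have hE1 : E < 1 := by
    rw [hE, ← Real.exp_zero]
    exact Real.exp_lt_exp.mpr (by linarith)
  have h1E : (0:ℝ) < 1 - E := by linarith
  set t : ℝ := η * α / p with ht
  have ht0 : 0 ≤ t := le_of_lt (div_pos hηα hp0)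
  refine ⟨?_, ?_, ?_⟩
  · -- positive semidefiniteness
    intro N x hx c
    set f : Fin p → Fin N → Fin N → ℝ := fun i a b =>
      Real.exp (t * min (x a i) (x b i)) * Real.exp (t * min (1 - x a i) (1 - x b i)) with hf
    have hQ : (Matrix.of fun a b => (∏ i, f i a b) - 1).PosSemidef := by
      refine prod_Q' Finset.univ f fun i _ => ?_
      exact mul_shift'
        (expMin_psd' ht0 (fun a => x a i) (fun a => hx a i))
        (expMin_psd' ht0 (fun a => 1 - x a i) (fun a => by
          have h := hx a i
          simp only [Set.mem_Icc] at h ⊢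
          constructor <;> linarith))
    set C : ℝ := α * E / (1 - E) with hC
    have hC0 : 0 ≤ C := by
      apply div_nonneg _ (le_of_lt h1E)
      exact mul_nonneg (le_of_lt hα.1) (Real.exp_pos _).le
    have hterm : ∀ a b,
        1 - α + (α / (1 - E)) * (Real.exp (-(η * α) * (∑ i, |x a i - x b i|) / p) - E)
          = (1 - α) + C * ((∏ i, f i a b) - 1) := by
      intro a b
      have hprod : (∏ i, f i a b)
          = Real.exp (t * ((p:ℝ) - ∑ i, |x a i - x b i|)) := by
        have h1 : (∏ i, f i a b) = Real.exp (∑ i : Fin p,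
            (t * min (x a i) (x b i) + t * min (1 - x a i) (1 - x b i))) := by
          rw [Real.exp_sum]
          exact Finset.prod_congr rfl fun i _ => by rw [Real.exp_add]
        rw [h1]
        congr 1
        have h2 : ∀ i : Fin p, t * min (x a i) (x b i) + t * min (1 - x a i) (1 - x b i)
            = t * (1 - |x a i - x b i|) := by
          intro i
          rw [← mul_add, min_add_min']
        rw [Finset.sum_congr rfl (fun i _ => h2 i), ← Finset.mul_sum]
        congr 1
        rw [Finset.sum_sub_distrib]
        simp [Finset.card_univ]
      have hexp : Real.exp (-(η * α) * (∑ i, |x a i - x b i|) / p)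
          = E * (∏ i, f i a b) := by
        rw [hprod, hE, ← Real.exp_add]
        congr 1
        rw [ht]
        field_simp
        ring
      rw [hexp, hC]
      field_simp
    calc (0:ℝ) ≤ (1 - α) * ((∑ a, c a) * (∑ a, c a))
          + C * (∑ a, ∑ b, c a * c b * ((Matrix.of fun a b => (∏ i, f i a b) - 1) a b)) := by
          have h1 : 0 ≤ (1 - α) * ((∑ a, c a) * (∑ a, c a)) :=
            mul_nonneg (by linarith [hα.2]) (mul_self_nonneg _)
          have h2 := quad_of_psd' hQ c
          positivity
      _ = ∑ a, ∑ b, c a * c b * ((1 - α) + C * ((∏ i, f i a b) - 1)) := by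
          rw [Finset.sum_mul_sum, Finset.mul_sum, Finset.mul_sum, ← Finset.sum_add_distrib]
          refine Finset.sum_congr rfl fun a _ => ?_
          rw [Finset.mul_sum, Finset.mul_sum, ← Finset.sum_add_distrib]
          refine Finset.sum_congr rfl fun b _ => ?_
          simp only [Matrix.of_apply]
          ring
      _ = ∑ a, ∑ b, c a * c b *
          (1 - α + (α / (1 - E)) * (Real.exp (-(η * α) * (∑ i, |x a i - x b i|) / p) - E)) := by
          refine Finset.sum_congr rfl fun a _ => Finset.sum_congr rfl fun b _ => ?_
          rw [hterm a b]
  · -- diagonal equals 1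
    intro x hx
    have hsum : (∑ i, |x i - x i|) = 0 := by simp
    rw [hsum]
    simp only [mul_zero, zero_div, Real.exp_zero]
    rw [div_mul_eq_mul_div, mul_comm, ← div_mul_eq_mul_div, div_self (ne_of_gt h1E)]
    ring
  · -- maximally separated points
    intro x x' hx hx' hsum
    rw [hsum]
    have : -(η * α) * (p:ℝ) / (p:ℝ) = -(η * α) := by
      field_simp
    rw [this]
    simp
    exact Or.inr (by simp [hE])
end
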